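/- arXiv:2312.10538 — 3 statements merged into one kernel-verified Lean document; each statement's English description precedes it below -/
import Mathlib

section
/- Let K be a finite simplicial complex of ℝⁿ, L a finite simplicial complex of ℝ^m, and f : |K| → |L| continuous. Then there exists an integer κ ≥ 0 and a simplicial approximation h : |sd^κ(K)| = |K| → |L| of f. -/
open Set Finset Metric

noncomputable section

namespace Paper

abbrev Euc (n : ℕ) := EuclideanSpace ℝ (Fin n)

variable {E : Type*} {F : Type*}

section Module
variable [AddCommGroup E] [Module ℝ E] [AddCommGroup F] [Module ℝ F]

/-- The barycenter (centroid) of a finite set of points. -/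
def bary (s : Finset E) : E := (s.card : ℝ)⁻¹ • ∑ x ∈ s, x

/-- The relative boundary of the simplex with vertex set `s`: the union of its proper faces. -/
def relBdry (s : Finset E) : Set E :=
  ⋃ t ∈ {t : Finset E | t ⊂ s}, convexHull ℝ (↑t : Set E)

/-- The relative interior of the simplex with vertex set `s`. -/
def relInt (s : Finset E) : Set E := convexHull ℝ (↑s : Set E) \ relBdry s

/-- A finite simplicial complex, described by the vertex sets of its simplices. -/
structure SimpComplex (E : Type*) [AddCommGroup E] [Module ℝ E] where
  faces : Finset (Finset E)
  nonempty_mem : ∀ s ∈ faces, s.Nonempty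
  indep : ∀ s ∈ faces, AffineIndependent ℝ ((↑) : s → E)
  down_closed : ∀ s ∈ faces, ∀ t ⊆ s, t.Nonempty → t ∈ faces
  inter_subset : ∀ s ∈ faces, ∀ t ∈ faces,
    convexHull ℝ (↑s : Set E) ∩ convexHull ℝ (↑t : Set E) ⊆
      convexHull ℝ ((↑s : Set E) ∩ (↑t : Set E))

/-- The underlying polyhedron of a family of simplices (given by vertex sets). -/
def polyh (Fs : Set (Finset E)) : Set E := ⋃ s ∈ Fs, convexHull ℝ (↑s : Set E)

/-- The vertices of a family of simplices. -/
def vertices (Fs : Set (Finset E)) : Set E := {v | ∃ s ∈ Fs, v ∈ s}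

/-- The open star of a vertex. -/
def starOf (Fs : Set (Finset E)) (v : E) : Set E :=
  ⋃ s ∈ {s | s ∈ Fs ∧ v ∈ s}, relInt s

/-- A maximal simplex: one which is not a proper face of another simplex of the family. -/
def IsMaximalFace (Fs : Set (Finset E)) (s : Finset E) : Prop :=
  s ∈ Fs ∧ ∀ t ∈ Fs, s ⊆ t → t = s

/-- `Kstar` is a subdivision (refinement) of `K`. -/
def IsSubdivision (K Kstar : SimpComplex E) : Prop :=
  polyh (↑Kstar.faces : Set (Finset E)) = polyh (↑K.faces : Set (Finset E)) ∧
  ∀ s ∈ Kstar.faces, ∃ t ∈ K.faces,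
    convexHull ℝ (↑s : Set E) ⊆ convexHull ℝ (↑t : Set E)

/-- `σ` is a simplex of the family of minimal dimension containing the point `ν`. -/
def IsMinContainingFace (Fs : Set (Finset E)) (ν : E) (σ : Finset E) : Prop :=
  σ ∈ Fs ∧ ν ∈ convexHull ℝ (↑σ : Set E) ∧
    ∀ t ∈ Fs, ν ∈ convexHull ℝ (↑t : Set E) → σ.card ≤ t.card

/-- `h` is affine on each simplex of the family. -/
def IsPWAffineOn (Fs : Set (Finset E)) (h : E → F) : Prop :=
  ∀ s ∈ Fs, ∀ w : E → ℝ, (∀ x ∈ s, 0 ≤ w x) → (∑ x ∈ s, w x) = 1 →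
    h (∑ x ∈ s, w x • x) = ∑ x ∈ s, w x • h x

/-- A simplicial map: piecewise affine and taking the vertex set of each simplex onto
the vertex set of a simplex of the target complex. -/
def IsSimplicialMap (Fs : Set (Finset E)) (Gs : Set (Finset F)) (h : E → F) : Prop :=
  IsPWAffineOn Fs h ∧ ∀ s ∈ Fs, ∃ t ∈ Gs, h '' (↑s : Set E) = (↑t : Set F)

/-- A simplicial approximation of `f`. -/
def IsSimplicialApprox (Fs : Set (Finset E)) (Gs : Set (Finset F)) (f h : E → F) : Prop :=
  IsSimplicialMap Fs Gs h ∧ ∀ v ∈ vertices Fs, f '' starOf Fs v ⊆ starOf Gs (h v)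

/-- The barycentric subdivision: its simplices are spanned by the barycenters of
the members of a chain of simplices of the original family. -/
def sd (Fs : Set (Finset E)) : Set (Finset E) :=
  {t | ∃ c : Finset (Finset E), (↑c : Set (Finset E)) ⊆ Fs ∧ c.Nonempty ∧
    IsChain (· ⊆ ·) (↑c : Set (Finset E)) ∧ (↑t : Set E) = bary '' (↑c : Set (Finset E))}

/-- Iterated barycentric subdivision. -/
def sdIter (Fs : Set (Finset E)) (κ : ℕ) : Set (Finset E) := sd^[κ] Fs

end Module

section Normed
variable [NormedAddCommGroup E] [NormedSpace ℝ E]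

/-- The distance from the barycenter of a simplex to its relative boundary. -/
def simpDelta (s : Finset E) : ℝ := infDist (bary s) (relBdry s)

/-- The second open star of a vertex: the union of the open stars of all vertices
belonging to the closed star of `v`. -/
def star2 (Fs : Set (Finset E)) (v : E) : Set E :=
  ⋃ w ∈ {w | w ∈ vertices Fs ∧ w ∈ closure (starOf Fs v)}, starOf Fs w

/-- The `ε`-squeezing map of a single simplex `τ` (of full dimension, with barycenter `b`
and `δ = dist(b, ∂τ)`): it is the inverse of the homothety `θ` of center `b` and ratio `ε/δ`
on `θ(τ)`, and the radial retraction from `b` onto `∂τ` on the rest of `τ`. -/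
def IsSimplexSqueeze (τ : Finset E) (ε : ℝ) (π : E → E) : Prop :=
  ∀ x ∈ convexHull ℝ (↑τ : Set E),
    ((∃ y ∈ convexHull ℝ (↑τ : Set E), x = bary τ + (ε / simpDelta τ) • (y - bary τ)) →
      π x = bary τ + (simpDelta τ / ε) • (x - bary τ)) ∧
    ((¬ ∃ y ∈ convexHull ℝ (↑τ : Set E), x = bary τ + (ε / simpDelta τ) • (y - bary τ)) →
      π x ∈ relBdry τ ∧ ∃ t : ℝ, 0 ≤ t ∧ π x = bary τ + t • (x - bary τ))

/-- The `ε`-squeezing map of a simplicial family: it acts as the simplex squeezing map on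
each maximal simplex of dimension `≥ 1` and is the identity elsewhere. -/
def IsSqueezingMap (Fs : Set (Finset E)) (ε : ℝ) (π : E → E) : Prop :=
  (∀ x ∈ polyh Fs, (∀ τ : Finset E, IsMaximalFace Fs τ → 2 ≤ τ.card → x ∉ relInt τ) → π x = x) ∧
  ∀ τ : Finset E, IsMaximalFace Fs τ → 2 ≤ τ.card → IsSimplexSqueeze τ ε π

end Normed

/-- Semialgebraic subsets of `ℝ^k`. -/
inductive IsSemialgebraic : {k : ℕ} → Set (Fin k → ℝ) → Prop
  | zero {k : ℕ} (p : MvPolynomial (Fin k) ℝ) :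
      IsSemialgebraic {x : Fin k → ℝ | MvPolynomial.eval x p = 0}
  | pos {k : ℕ} (p : MvPolynomial (Fin k) ℝ) :
      IsSemialgebraic {x : Fin k → ℝ | 0 < MvPolynomial.eval x p}
  | union {k : ℕ} {A B : Set (Fin k → ℝ)} :
      IsSemialgebraic A → IsSemialgebraic B → IsSemialgebraic (A ∪ B)
  | inter {k : ℕ} {A B : Set (Fin k → ℝ)} :
      IsSemialgebraic A → IsSemialgebraic B → IsSemialgebraic (A ∩ B)

/-- An o-minimal structure (expanding the ordered field of real numbers). -/
structure OMinStructure where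
  defSet : (k : ℕ) → Set (Set (Fin k → ℝ))
  union_mem : ∀ {k : ℕ} {A B : Set (Fin k → ℝ)},
    A ∈ defSet k → B ∈ defSet k → A ∪ B ∈ defSet k
  compl_mem : ∀ {k : ℕ} {A : Set (Fin k → ℝ)}, A ∈ defSet k → Aᶜ ∈ defSet k
  algebraic_mem : ∀ {k : ℕ} (p : MvPolynomial (Fin k) ℝ),
    {x : Fin k → ℝ | MvPolynomial.eval x p = 0} ∈ defSet k
  prod_mem : ∀ {k l : ℕ} {A : Set (Fin k → ℝ)} {B : Set (Fin l → ℝ)},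
    A ∈ defSet k → B ∈ defSet l →
    {z : Fin (k + l) → ℝ | (fun i => z (Fin.castAdd l i)) ∈ A ∧
      (fun j => z (Fin.natAdd k j)) ∈ B} ∈ defSet (k + l)
  proj_mem : ∀ {k : ℕ} {A : Set (Fin (k + 1) → ℝ)}, A ∈ defSet (k + 1) →
    {x : Fin k → ℝ | ∃ t : ℝ, Fin.snoc x t ∈ A} ∈ defSet k
  one_dim : ∀ A : Set (Fin 1 → ℝ), A ∈ defSet 1 ↔
    ∃ s : Finset (Set ℝ), (∀ I ∈ s, I.OrdConnected) ∧
      A = {x : Fin 1 → ℝ | x 0 ∈ ⋃ I ∈ s, I}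

/-- A definable subset of `ℝ^k` (viewed as Euclidean space). -/
def DefSet (S : OMinStructure) {k : ℕ} (A : Set (Euc k)) : Prop :=
  {x : Fin k → ℝ | (WithLp.equiv 2 (Fin k → ℝ)).symm x ∈ A} ∈ S.defSet k

/-- A map `f : X → ℝ^l`, `X ⊆ ℝ^k`, is definable if its graph is a definable set. -/
def DefMapOn (S : OMinStructure) {k l : ℕ} (f : Euc k → Euc l) (X : Set (Euc k)) : Prop :=
  {z : Fin (k + l) → ℝ | ∃ x ∈ X, (∀ i, z (Fin.castAdd l i) = x i) ∧
    ∀ j, z (Fin.natAdd k j) = f x j} ∈ S.defSet (k + l)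

end Paper

open Paper

namespace SAux
open scoped Classical
open Paper

variable {E : Type*} [NormedAddCommGroup E] [NormedSpace ℝ E]

theorem indep_iff (t : Finset E) :
    AffineIndependent ℝ ((↑) : t → E) ↔
      ∀ g : E → ℝ, ∑ v ∈ t, g v = 0 → ∑ v ∈ t, g v • v = 0 → ∀ v ∈ t, g v = 0 := by
  rw [affineIndependent_iff]
  constructor
  · intro H g hg0 hgv v hv
    exact H Finset.univ (fun i => g ↑i)
      (by rw [← hg0]; exact t.sum_coe_sort g)
      (by rw [← hgv]; exact t.sum_coe_sort (fun v => g v • v)) ⟨v, hv⟩ (Finset.mem_univ _)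
  · intro H s w hw0 hwv i hi
    set w' : {x // x ∈ t} → ℝ := fun e => if e ∈ s then w e else 0 with hw'def
    set g : E → ℝ := fun v => if hv : v ∈ t then w' ⟨v, hv⟩ else 0 with hgdef
    have hge : ∀ e : {x // x ∈ t}, g ↑e = w' e := by
      intro e; simp [hgdef, e.2]
    have h1 : ∑ v ∈ t, g v = 0 := by
      rw [← t.sum_coe_sort g]
      calc ∑ e : {x // x ∈ t}, g ↑e = ∑ e : {x // x ∈ t}, w' e :=
            Finset.sum_congr rfl (fun e _ => hge e)
        _ = ∑ e ∈ s, w e := by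
            rw [hw'def]; simp only [Finset.sum_ite_mem]
            rw [Finset.univ_inter]
        _ = 0 := hw0
    have h2 : ∑ v ∈ t, g v • v = 0 := by
      rw [← t.sum_coe_sort (fun v => g v • v)]
      calc ∑ e : {x // x ∈ t}, g ↑e • (e : E) = ∑ e : {x // x ∈ t}, w' e • (e : E) :=
            Finset.sum_congr rfl (fun e _ => by rw [hge e])
        _ = ∑ e ∈ s, w e • (e : E) := by
            rw [hw'def]
            simp only [ite_smul, zero_smul, Finset.sum_ite_mem]
            rw [Finset.univ_inter]
        _ = 0 := hwv
    have := H g h1 h2 i.1 i.2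
    rw [hge] at this
    simpa [hw'def, hi] using this

theorem mem_convexHull_fin (t : Finset E) (x : E) :
    x ∈ convexHull ℝ (↑t : Set E) ↔ ∃ w : E → ℝ,
      (∀ v ∈ t, 0 ≤ w v) ∧ ∑ v ∈ t, w v = 1 ∧ ∑ v ∈ t, w v • v = x := by
  rw [Finset.convexHull_eq]
  constructor
  · rintro ⟨w, h0, h1, h2⟩
    refine ⟨w, h0, h1, ?_⟩
    rw [← h2, Finset.centerMass, h1]
    simp
  · rintro ⟨w, h0, h1, h2⟩
    refine ⟨w, h0, h1, ?_⟩
    rw [Finset.centerMass, h1]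
    simpa using h2

theorem coords_unique {t : Finset E} (ht : AffineIndependent ℝ ((↑) : t → E))
    {w w' : E → ℝ} (hw : ∑ v ∈ t, w v = 1) (hw' : ∑ v ∈ t, w' v = 1)
    (h : ∑ v ∈ t, w v • v = ∑ v ∈ t, w' v • v) : ∀ v ∈ t, w v = w' v := by
  intro v hv
  have := (indep_iff t).mp ht (fun v => w v - w' v)
    (by rw [Finset.sum_sub_distrib, hw, hw', sub_self])
    (by simp only [sub_smul, Finset.sum_sub_distrib, h, sub_self]) v hv
  linarith

theorem mem_relBdry_iff {s : Finset E} {x : E} :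
    x ∈ relBdry s ↔ ∃ t, t ⊂ s ∧ x ∈ convexHull ℝ (↑t : Set E) := by
  simp [relBdry, Set.mem_iUnion]

theorem relInt_subset {s : Finset E} : relInt s ⊆ convexHull ℝ (↑s : Set E) :=
  Set.diff_subset

theorem mem_relInt_of_pos {t : Finset E} (ht : AffineIndependent ℝ ((↑) : t → E))
    {w : E → ℝ} (hpos : ∀ v ∈ t, 0 < w v) (hw : ∑ v ∈ t, w v = 1) :
    (∑ v ∈ t, w v • v) ∈ relInt t := by
  constructor
  · exact (mem_convexHull_fin t _).mpr ⟨w, fun v hv => (hpos v hv).le, hw, rfl⟩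
  · intro hb
    obtain ⟨t', ht', hxt'⟩ := mem_relBdry_iff.mp hb
    obtain ⟨w', h0', h1', h2'⟩ := (mem_convexHull_fin t' _).mp hxt'
    set w'' : E → ℝ := fun v => if v ∈ t' then w' v else 0 with hw''
    obtain ⟨v, hvt, hvt'⟩ := Finset.exists_of_ssubset ht'
    have hsum : ∑ v ∈ t, w'' v = 1 := by
      rw [hw'']; simp only [Finset.sum_ite_mem]
      rw [Finset.inter_eq_right.mpr ht'.subset, h1']
    have hvec : ∑ v ∈ t, w'' v • v = ∑ v ∈ t, w v • v := by
      rw [hw'']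
      simp only [ite_smul, zero_smul, Finset.sum_ite_mem]
      rw [Finset.inter_eq_right.mpr ht'.subset, h2']
    have := coords_unique ht hw hsum hvec.symm v hvt
    rw [hw''] at this
    simp only [hvt', if_neg] at this
    exact absurd (this ▸ hpos v hvt) (by simp)

theorem pos_coords_of_mem_relInt {t : Finset E} (ht : AffineIndependent ℝ ((↑) : t → E))
    {x : E} (hx : x ∈ relInt t) :
    ∃ w : E → ℝ, (∀ v ∈ t, 0 < w v) ∧ ∑ v ∈ t, w v = 1 ∧ ∑ v ∈ t, w v • v = x := by
  obtain ⟨w, h0, h1, h2⟩ := (mem_convexHull_fin t x).mp hx.1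
  refine ⟨w, fun v hv => ?_, h1, h2⟩
  rcases (h0 v hv).lt_or_eq with h | h
  · exact h
  · exfalso
    apply hx.2
    refine mem_relBdry_iff.mpr ⟨t.erase v, Finset.erase_ssubset hv, ?_⟩
    refine (mem_convexHull_fin _ _).mpr ⟨w, fun u hu => h0 u (Finset.mem_of_mem_erase hu), ?_, ?_⟩
    · rw [Finset.sum_erase _ h.symm, h1]
    · rw [Finset.sum_erase _ (by rw [← h]; simp), h2]

theorem bary_eq_sum {s : Finset E} (hs : s.Nonempty) :
    bary s = ∑ v ∈ s, ((s.card : ℝ)⁻¹) • v := by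
  rw [bary, Finset.smul_sum]

theorem bary_coords_sum {s : Finset E} (hs : s.Nonempty) :
    ∑ _v ∈ s, ((s.card : ℝ)⁻¹) = 1 := by
  rw [Finset.sum_const, nsmul_eq_mul]
  have : (s.card : ℝ) ≠ 0 := Nat.cast_ne_zero.mpr (Finset.card_ne_zero_of_mem hs.choose_spec)
  field_simp

theorem bary_mem_relInt {s : Finset E} (hs : s.Nonempty)
    (hi : AffineIndependent ℝ ((↑) : s → E)) : bary s ∈ relInt s := by
  rw [bary_eq_sum hs]
  exact mem_relInt_of_pos hi
    (fun v hv => inv_pos.mpr (by exact_mod_cast Finset.card_pos.mpr hs)) (bary_coords_sum hs)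

theorem bary_mem_convexHull {s : Finset E} (hs : s.Nonempty) :
    bary s ∈ convexHull ℝ (↑s : Set E) := by
  rw [bary_eq_sum hs]
  exact (mem_convexHull_fin _ _).mpr
    ⟨fun _ => (s.card : ℝ)⁻¹, fun v hv => by positivity, bary_coords_sum hs, rfl⟩

/-- The invariant preserved by barycentric subdivision. -/
structure Cx (Fs : Set (Finset E)) : Prop where
  nonempty : ∀ s ∈ Fs, Finset.Nonempty s
  indep : ∀ s ∈ Fs, AffineIndependent ℝ ((↑) : s → E)
  down : ∀ s ∈ Fs, ∀ t ⊆ s, t.Nonempty → t ∈ Fs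
  disj : ∀ σ ∈ Fs, ∀ τ ∈ Fs, (relInt σ ∩ relInt τ).Nonempty → σ = τ

theorem support_lemma {Fs : Set (Finset E)} (hF : Cx Fs) {s : Finset E} (hs : s ∈ Fs)
    {w : E → ℝ} (h0 : ∀ v ∈ s, 0 ≤ w v) (h1 : ∑ v ∈ s, w v = 1) :
    s.filter (fun v => w v ≠ 0) ∈ Fs ∧
    (∀ v ∈ s.filter (fun v => w v ≠ 0), 0 < w v) ∧
    (∑ v ∈ s.filter (fun v => w v ≠ 0), w v = 1) ∧
    (∑ v ∈ s.filter (fun v => w v ≠ 0), w v • v = ∑ v ∈ s, w v • v) ∧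
    (∑ v ∈ s, w v • v) ∈ relInt (s.filter (fun v => w v ≠ 0)) := by
  set t := s.filter (fun v => w v ≠ 0) with htdef
  have hts : t ⊆ s := Finset.filter_subset _ _
  have hpos : ∀ v ∈ t, 0 < w v := by
    intro v hv
    rw [htdef, Finset.mem_filter] at hv
    exact (h0 v hv.1).lt_of_ne (Ne.symm hv.2)
  have hsum : ∑ v ∈ t, w v = 1 := by rw [htdef, Finset.sum_filter_ne_zero, h1]
  have htne : t.Nonempty := by
    by_contra hemp
    rw [Finset.not_nonempty_iff_eq_empty] at hemp
    rw [hemp] at hsum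
    simp at hsum
  have htF : t ∈ Fs := hF.down s hs t hts htne
  have hvec : ∑ v ∈ t, w v • v = ∑ v ∈ s, w v • v := by
    rw [htdef]
    exact Finset.sum_filter_of_ne (fun v _ hne => by
      intro h0'; rw [h0', zero_smul] at hne; exact hne rfl)
  refine ⟨htF, hpos, hsum, hvec, ?_⟩
  rw [← hvec]
  exact mem_relInt_of_pos (hF.indep t htF) hpos hsum

/-- carrier existence -/
theorem carrier_exists {Fs : Set (Finset E)} (hF : Cx Fs) {x : E} (hx : x ∈ polyh Fs) :
    ∃ σ ∈ Fs, x ∈ relInt σ := by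
  simp only [polyh, Set.mem_iUnion] at hx
  obtain ⟨s, hs, hxs⟩ := hx
  obtain ⟨w, h0, h1, h2⟩ := (mem_convexHull_fin s x).mp hxs
  obtain ⟨htF, _, _, _, hri⟩ := support_lemma hF hs h0 h1
  exact ⟨_, htF, h2 ▸ hri⟩

theorem subset_of_relInt_mem (K : SimpComplex E) {σ t : Finset E} (hσ : σ ∈ K.faces)
    (ht : t ∈ K.faces) {x : E} (hx : x ∈ relInt σ) (hxt : x ∈ convexHull ℝ (↑t : Set E)) :
    σ ⊆ t := by
  by_contra hns
  have hx2 : x ∈ convexHull ℝ ((↑σ : Set E) ∩ (↑t : Set E)) :=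
    K.inter_subset σ hσ t ht ⟨relInt_subset hx, hxt⟩
  rw [← Finset.coe_inter] at hx2
  exact hx.2 (mem_relBdry_iff.mpr ⟨σ ∩ t, by
    rw [Finset.ssubset_iff_subset_ne]
    exact ⟨Finset.inter_subset_left, fun h => hns (Finset.inter_eq_left.mp h)⟩, hx2⟩)

theorem cx_simpComplex (K : SimpComplex E) : Cx (↑K.faces : Set (Finset E)) := by
  refine ⟨fun s hs => K.nonempty_mem s hs, fun s hs => K.indep s hs,
    fun s hs t hts htne => K.down_closed s hs t hts htne, ?_⟩
  rintro σ hσ τ hτ ⟨x, hxσ, hxτ⟩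
  exact Finset.Subset.antisymm
    (subset_of_relInt_mem K hσ hτ hxσ (relInt_subset hxτ))
    (subset_of_relInt_mem K hτ hσ hxτ (relInt_subset hxσ))

theorem chain_max {c : Finset (Finset E)} (hne : c.Nonempty)
    (hc : IsChain (· ⊆ ·) (↑c : Set (Finset E))) : ∃ T ∈ c, ∀ s ∈ c, s ⊆ T := by
  obtain ⟨T, hT, hmax⟩ := c.exists_maximal hne
  refine ⟨T, hT, fun s hs => ?_⟩
  by_cases hst : s = T
  · exact hst ▸ Finset.Subset.refl s
  · rcases hc hT hs (fun he => hst he.symm) with h | h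
    · have hTs : T = s := by
        by_contra hne
        exact hne (Finset.Subset.antisymm h (hmax hs h))
      rw [hTs]
    · exact h

theorem chain_min {c : Finset (Finset E)} (hne : c.Nonempty)
    (hc : IsChain (· ⊆ ·) (↑c : Set (Finset E))) : ∃ T ∈ c, ∀ s ∈ c, T ⊆ s := by
  obtain ⟨T, hT, hmin⟩ := c.exists_minimal hne
  refine ⟨T, hT, fun s hs => ?_⟩
  by_cases hst : s = T
  · exact hst ▸ Finset.Subset.refl s
  · rcases hc hT hs (fun he => hst he.symm) with h | h
    · exact h
    · exact absurd (Finset.Subset.antisymm h (hmin hs h)) hst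

theorem bary_inj {T : Finset E} (hT : AffineIndependent ℝ ((↑) : T → E))
    {s s' : Finset E} (hs : s ⊆ T) (hs' : s' ⊆ T) (hn : s.Nonempty) (hn' : s'.Nonempty)
    (h : bary s = bary s') : s = s' := by
  have hsum : ∀ (u : Finset E), u ⊆ T → u.Nonempty →
      ∑ v ∈ T, (fun v => if v ∈ u then (u.card : ℝ)⁻¹ else 0) v = 1 := by
    intro u hu hun
    rw [Finset.sum_ite_mem, Finset.inter_eq_right.mpr hu]
    exact bary_coords_sum hun
  have hvec : ∀ (u : Finset E), u ⊆ T → u.Nonempty →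
      ∑ v ∈ T, (fun v => if v ∈ u then (u.card : ℝ)⁻¹ else 0) v • v = bary u := by
    intro u hu hun
    simp only [ite_smul, zero_smul]
    rw [Finset.sum_ite_mem, Finset.inter_eq_right.mpr hu]
    exact (bary_eq_sum hun).symm
  have key := coords_unique hT (hsum s hs hn) (hsum s' hs' hn')
    (by rw [hvec s hs hn, hvec s' hs' hn', h])
  apply Finset.Subset.antisymm
  · intro v hv
    have hk := key v (hs hv)
    simp only [hv, if_pos] at hk
    by_contra hv'
    simp only [hv', if_neg, if_false] at hk
    have hp : (0:ℝ) < (s.card : ℝ)⁻¹ :=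
      inv_pos.mpr (by exact_mod_cast Finset.card_pos.mpr hn)
    linarith
  · intro v hv
    have hk := key v (hs' hv)
    simp only [hv, if_pos] at hk
    by_contra hv'
    simp only [hv', if_neg, if_false] at hk
    have hp : (0:ℝ) < (s'.card : ℝ)⁻¹ :=
      inv_pos.mpr (by exact_mod_cast Finset.card_pos.mpr hn')
    linarith

/-- separating vertex in a chain -/
theorem chain_sep {c : Finset (Finset E)} (hc : IsChain (· ⊆ ·) (↑c : Set (Finset E)))
    {s : Finset E} (hs : s ∈ c) (hn : s.Nonempty) :
    ∃ v ∈ s, ∀ s' ∈ c, (v ∈ s' ↔ s ⊆ s') := by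
  set pred := c.filter (fun s' => s' ⊂ s) with hpred
  by_cases hp : pred.Nonempty
  · obtain ⟨s₁, hs₁, hmax⟩ := chain_max hp (hc.mono (by
      rw [hpred]; exact_mod_cast Finset.filter_subset _ c))
    have hs₁c : s₁ ∈ c := (Finset.filter_subset _ c) hs₁
    have hs₁s : s₁ ⊂ s := (Finset.mem_filter.mp hs₁).2
    obtain ⟨v, hvs, hvs₁⟩ := Finset.exists_of_ssubset hs₁s
    refine ⟨v, hvs, fun s' hs' => ⟨fun hv => ?_, fun h => h hvs⟩⟩
    by_cases he : s' = s
    · exact he ▸ Finset.Subset.refl s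
    · rcases hc hs' hs he with h | h
      · exact absurd (hmax s' (Finset.mem_filter.mpr ⟨hs', lt_of_le_of_ne h he⟩) hv) hvs₁
      · exact h
  · obtain ⟨v, hvs⟩ := hn
    refine ⟨v, hvs, fun s' hs' => ⟨fun hv => ?_, fun h => h hvs⟩⟩
    by_cases he : s' = s
    · exact he ▸ Finset.Subset.refl s
    · rcases hc hs' hs he with h | h
      · exact absurd ⟨s', Finset.mem_filter.mpr ⟨hs', lt_of_le_of_ne h he⟩⟩ hp
      · exact h

/-- summation swap: expressing a combination of barycenters in terms of the top vertices -/
theorem swap_sum (T : Finset E) {c : Finset (Finset E)}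
    (hsub : ∀ s ∈ c, s ⊆ T) (hne : ∀ s ∈ c, s.Nonempty) (lam : Finset E → ℝ) :
    ∑ s ∈ c, lam s • bary s
      = ∑ v ∈ T, (∑ s ∈ c.filter (fun s => v ∈ s), lam s / s.card) • v := by
  have step : ∀ v ∈ T, (∑ s ∈ c.filter (fun s => v ∈ s), lam s / s.card) • v
      = ∑ s ∈ c, (if v ∈ s then (lam s / s.card) • v else 0) := by
    intro v _
    rw [Finset.sum_smul, Finset.sum_filter]
  rw [Finset.sum_congr rfl step, Finset.sum_comm]
  refine Finset.sum_congr rfl (fun s hsc => ?_)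
  have : ∑ v ∈ T, (if v ∈ s then (lam s / s.card) • v else 0)
      = ∑ v ∈ s, (lam s / s.card) • v := by
    rw [← Finset.sum_filter, Finset.filter_mem_eq_inter, Finset.inter_eq_right.mpr (hsub s hsc)]
  rw [this, bary, Finset.smul_sum, Finset.smul_sum]
  refine Finset.sum_congr rfl (fun v _ => ?_)
  rw [smul_smul, div_eq_mul_inv]

theorem swap_sum_aux (T : Finset E) {c : Finset (Finset E)}
    (hsub : ∀ s ∈ c, s ⊆ T) (hne : ∀ s ∈ c, s.Nonempty) (lam : Finset E → ℝ) : True := trivial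

theorem swap_sum' (T : Finset E) {c : Finset (Finset E)}
    (hsub : ∀ s ∈ c, s ⊆ T) (hne : ∀ s ∈ c, s.Nonempty) (lam : Finset E → ℝ) :
    ∑ s ∈ c, lam s = ∑ v ∈ T, (∑ s ∈ c.filter (fun s => v ∈ s), lam s / s.card) := by
  have step : ∀ v ∈ T, (∑ s ∈ c.filter (fun s => v ∈ s), lam s / s.card)
      = ∑ s ∈ c, (if v ∈ s then lam s / s.card else 0) :=
    fun v _ => Finset.sum_filter _ _
  rw [Finset.sum_congr rfl step, Finset.sum_comm]
  refine Finset.sum_congr rfl (fun s hsc => ?_)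
  rw [← Finset.sum_filter, Finset.filter_mem_eq_inter, Finset.inter_eq_right.mpr (hsub s hsc),
    Finset.sum_const, nsmul_eq_mul]
  have hcard : (s.card : ℝ) ≠ 0 := Nat.cast_ne_zero.mpr (Finset.card_ne_zero_of_mem (hne s hsc).choose_spec)
  field_simp

/-- affine independence of the barycenters of a chain -/
theorem chain_bary_indep {T : Finset E} (hT : AffineIndependent ℝ ((↑) : T → E))
    {c : Finset (Finset E)} (hc : IsChain (· ⊆ ·) (↑c : Set (Finset E)))
    (hsub : ∀ s ∈ c, s ⊆ T) (hne : ∀ s ∈ c, s.Nonempty)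
    {t : Finset E} (htc : (↑t : Set E) = bary '' (↑c : Set (Finset E))) :
    AffineIndependent ℝ ((↑) : t → E) := by
  have hinj : ∀ x ∈ c, ∀ y ∈ c, bary x = bary y → x = y :=
    fun x hx y hy => bary_inj hT (hsub x hx) (hsub y hy) (hne x hx) (hne y hy)
  have htimg : t = c.image bary := Finset.coe_injective (by rw [Finset.coe_image, htc])
  rw [indep_iff]
  intro g hg0 hgv p hp
  set lam : Finset E → ℝ := fun s => g (bary s) with hlam
  have h1 : ∑ s ∈ c, lam s = 0 := by rw [← hg0, htimg, Finset.sum_image hinj]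
  have h2 : ∑ s ∈ c, lam s • bary s = 0 := by
    rw [← hgv, htimg, Finset.sum_image hinj]
  rw [swap_sum' T hsub hne lam] at h1
  rw [swap_sum T hsub hne lam] at h2
  have hW := (indep_iff T).mp hT _ h1 h2
  -- now show all lam vanish
  have hlam0 : ∀ s ∈ c, lam s = 0 := by
    by_contra hcon
    push_neg at hcon
    obtain ⟨sbad, hsbad, hlbad⟩ := hcon
    set c' := c.filter (fun s => lam s ≠ 0) with hc'
    have hc'ne : c'.Nonempty := ⟨sbad, Finset.mem_filter.mpr ⟨hsbad, hlbad⟩⟩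
    have hc'sub : c' ⊆ c := Finset.filter_subset _ _
    have hc'ch : IsChain (· ⊆ ·) (↑c' : Set (Finset E)) := hc.mono (by exact_mod_cast hc'sub)
    obtain ⟨s₀, hs₀, hs₀max⟩ := chain_max hc'ne hc'ch
    have hs₀c : s₀ ∈ c := hc'sub hs₀
    obtain ⟨v₀, hv₀, hsep⟩ := chain_sep hc'ch hs₀ (hne s₀ hs₀c)
    have hv₀T : v₀ ∈ T := hsub s₀ hs₀c hv₀
    have hfil : (c.filter (fun s => v₀ ∈ s)).filter (fun s => lam s / s.card ≠ 0) = {s₀} := by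
      apply Finset.ext
      intro s
      simp only [Finset.mem_filter, Finset.mem_singleton]
      constructor
      · rintro ⟨⟨hsc, hvs⟩, hlz⟩
        have hlnz : lam s ≠ 0 := fun h => hlz (by rw [h, zero_div])
        have hsc' : s ∈ c' := Finset.mem_filter.mpr ⟨hsc, hlnz⟩
        exact Finset.Subset.antisymm (hs₀max s hsc') ((hsep s hsc').mp hvs)
      · rintro rfl
        exact ⟨⟨hs₀c, hv₀⟩, div_ne_zero (Finset.mem_filter.mp hs₀).2
          (Nat.cast_ne_zero.mpr (Finset.card_ne_zero_of_mem hv₀))⟩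
    have := hW v₀ hv₀T
    rw [← Finset.sum_filter_ne_zero, hfil, Finset.sum_singleton] at this
    have hcz : (s₀.card : ℝ) ≠ 0 := Nat.cast_ne_zero.mpr (Finset.card_ne_zero_of_mem hv₀)
    exact (Finset.mem_filter.mp hs₀).2 ((div_eq_zero_iff.mp this).resolve_right hcz)
  rw [htimg] at hp
  obtain ⟨s, hsc, rfl⟩ := Finset.mem_image.mp hp
  exact hlam0 s hsc

/-- the level-set lemma -/
theorem level_eq {T : Finset E} {c : Finset (Finset E)}
    (hc : IsChain (· ⊆ ·) (↑c : Set (Finset E)))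
    (hsub : ∀ s ∈ c, s ⊆ T) (hne : ∀ s ∈ c, s.Nonempty)
    (lam : Finset E → ℝ) (hpos : ∀ s ∈ c, 0 < lam s)
    (W : E → ℝ) (hW : ∀ v ∈ T, W v = ∑ s ∈ c.filter (fun s => v ∈ s), lam s / s.card)
    {s₀ : Finset E} (hs₀ : s₀ ∈ c) {v₀ : E} (hv₀ : v₀ ∈ s₀)
    (hsep : ∀ s' ∈ c, (v₀ ∈ s' ↔ s₀ ⊆ s')) :
    s₀ = T.filter (fun v => W v₀ ≤ W v) := by
  have hv₀T : v₀ ∈ T := hsub s₀ hs₀ hv₀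
  have hnn : ∀ s ∈ c, 0 ≤ lam s / s.card := fun s hsc =>
    div_nonneg (hpos s hsc).le (Nat.cast_nonneg _)
  have hfil0 : c.filter (fun s => v₀ ∈ s) = c.filter (fun s => s₀ ⊆ s) :=
    Finset.filter_congr (fun s hsc => hsep s hsc)
  apply Finset.Subset.antisymm
  · intro v hv
    have hvT : v ∈ T := hsub s₀ hs₀ hv
    refine Finset.mem_filter.mpr ⟨hvT, ?_⟩
    rw [hW v₀ hv₀T, hW v hvT, hfil0]
    refine Finset.sum_le_sum_of_subset_of_nonneg ?_ (fun s hsc _ => hnn s (Finset.mem_filter.mp hsc).1)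
    intro s hsc
    rw [Finset.mem_filter] at hsc ⊢
    exact ⟨hsc.1, hsc.2 hv⟩
  · intro v hv
    obtain ⟨hvT, hWv⟩ := Finset.mem_filter.mp hv
    by_contra hvs₀
    have hsubfil : c.filter (fun s => v ∈ s) ⊆ (c.filter (fun s => s₀ ⊆ s)).erase s₀ := by
      intro s hsc
      rw [Finset.mem_filter] at hsc
      have hne' : s ≠ s₀ := fun he => hvs₀ (he ▸ hsc.2)
      rcases hc (Finset.mem_coe.mpr hsc.1) (Finset.mem_coe.mpr hs₀) hne' with h | h
      · exact absurd (h hsc.2) hvs₀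
      · exact Finset.mem_erase.mpr ⟨hne', Finset.mem_filter.mpr ⟨hsc.1, h⟩⟩
    have hlt : W v < W v₀ := by
      rw [hW v hvT, hW v₀ hv₀T, hfil0]
      calc ∑ s ∈ c.filter (fun s => v ∈ s), lam s / s.card
          ≤ ∑ s ∈ (c.filter (fun s => s₀ ⊆ s)).erase s₀, lam s / s.card :=
            Finset.sum_le_sum_of_subset_of_nonneg hsubfil
              (fun s hsc _ => hnn s (Finset.mem_filter.mp (Finset.mem_of_mem_erase hsc)).1)
        _ < lam s₀ / s₀.card + ∑ s ∈ (c.filter (fun s => s₀ ⊆ s)).erase s₀, lam s / s.card := by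
            have : (0:ℝ) < lam s₀ / s₀.card := div_pos (hpos s₀ hs₀)
              (by exact_mod_cast Finset.card_pos.mpr (hne s₀ hs₀))
            linarith
        _ = ∑ s ∈ c.filter (fun s => s₀ ⊆ s), lam s / s.card :=
            Finset.add_sum_erase _ (fun s => lam s / s.card)
              (Finset.mem_filter.mpr ⟨hs₀, Finset.Subset.refl s₀⟩)
    exact absurd hWv (not_le.mpr hlt)

theorem level_mem {T : Finset E} {c : Finset (Finset E)}
    (hc : IsChain (· ⊆ ·) (↑c : Set (Finset E)))
    (hsub : ∀ s ∈ c, s ⊆ T) (hne : ∀ s ∈ c, s.Nonempty)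
    (lam : Finset E → ℝ) (hpos : ∀ s ∈ c, 0 < lam s)
    (W : E → ℝ) (hW : ∀ v ∈ T, W v = ∑ s ∈ c.filter (fun s => v ∈ s), lam s / s.card)
    (hTc : T ∈ c) {v₀ : E} (hv₀ : v₀ ∈ T) :
    T.filter (fun v => W v₀ ≤ W v) ∈ c := by
  set cc := c.filter (fun s => v₀ ∈ s) with hcc
  have hccne : cc.Nonempty := ⟨T, Finset.mem_filter.mpr ⟨hTc, hv₀⟩⟩
  have hccch : IsChain (· ⊆ ·) (↑cc : Set (Finset E)) :=
    hc.mono (by exact_mod_cast Finset.filter_subset _ c)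
  obtain ⟨sm, hsm, hmin⟩ := chain_min hccne hccch
  have hsmc : sm ∈ c := (Finset.filter_subset _ c) hsm
  have hv₀sm : v₀ ∈ sm := (Finset.mem_filter.mp hsm).2
  have hsep : ∀ s' ∈ c, (v₀ ∈ s' ↔ sm ⊆ s') := by
    intro s' hs'
    constructor
    · intro hv
      exact hmin s' (Finset.mem_filter.mpr ⟨hs', hv⟩)
    · intro h
      exact h hv₀sm
  have := level_eq hc hsub hne lam hpos W hW hsmc hv₀sm hsep
  rw [← this]
  exact hsmc

theorem chain_repr {Fs : Set (Finset E)} (hF : Cx Fs) {c : Finset (Finset E)}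
    (hcF : (↑c : Set (Finset E)) ⊆ Fs) (hcne : c.Nonempty)
    (hcch : IsChain (· ⊆ ·) (↑c : Set (Finset E)))
    {t : Finset E} (htc : (↑t : Set E) = bary '' (↑c : Set (Finset E)))
    {x : E} (hx : x ∈ relInt t) :
    ∃ (T : Finset E) (lam : Finset E → ℝ), T ∈ c ∧ (∀ s ∈ c, s ⊆ T) ∧
      (∀ s ∈ c, 0 < lam s) ∧ ∑ s ∈ c, lam s = 1 ∧ ∑ s ∈ c, lam s • bary s = x ∧
      x ∈ relInt T := by
  obtain ⟨T, hTc, hsub⟩ := chain_max hcne hcch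
  have hTF : T ∈ Fs := hcF hTc
  have hne : ∀ s ∈ c, s.Nonempty := fun s hs => hF.nonempty s (hcF hs)
  have hsubT : ∀ s ∈ c, s ⊆ T := hsub
  have htind : AffineIndependent ℝ ((↑) : t → E) :=
    chain_bary_indep (hF.indep T hTF) hcch hsubT hne htc
  obtain ⟨μ, hμpos, hμ1, hμx⟩ := pos_coords_of_mem_relInt htind hx
  have hinj : ∀ x ∈ c, ∀ y ∈ c, bary x = bary y → x = y :=
    fun a ha b hb => bary_inj (hF.indep T hTF) (hsubT a ha) (hsubT b hb) (hne a ha) (hne b hb)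
  have htimg : t = c.image bary := Finset.coe_injective (by rw [Finset.coe_image, htc])
  set lam : Finset E → ℝ := fun s => μ (bary s) with hlam
  have h1 : ∑ s ∈ c, lam s = 1 := by rw [← hμ1, htimg, Finset.sum_image hinj]
  have h2 : ∑ s ∈ c, lam s • bary s = x := by rw [← hμx, htimg, Finset.sum_image hinj]
  have hpos : ∀ s ∈ c, 0 < lam s := fun s hs =>
    hμpos (bary s) (by rw [htimg]; exact Finset.mem_image_of_mem bary hs)
  refine ⟨T, lam, hTc, hsubT, hpos, h1, h2, ?_⟩
  have hx2 := swap_sum T hsubT hne lam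
  have hx1 := swap_sum' T hsubT hne lam
  rw [h2] at hx2; rw [h1] at hx1
  have hWpos : ∀ v ∈ T, 0 < ∑ s ∈ c.filter (fun s => v ∈ s), lam s / s.card := by
    intro v hv
    refine Finset.sum_pos (fun s hs => ?_) ⟨T, Finset.mem_filter.mpr ⟨hTc, hv⟩⟩
    have hsc := (Finset.mem_filter.mp hs).1
    exact div_pos (hpos s hsc) (by exact_mod_cast Finset.card_pos.mpr (hne s hsc))
  rw [hx2]
  exact mem_relInt_of_pos (hF.indep T hTF) hWpos hx1.symm

theorem cx_sd {Fs : Set (Finset E)} (hF : Cx Fs) : Cx (sd Fs) := by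
  constructor
  · rintro s ⟨c, hcF, hcne, hcch, hsc⟩
    rw [← Finset.coe_nonempty, hsc]
    exact (Finset.coe_nonempty.mpr hcne).image bary
  · rintro s ⟨c, hcF, hcne, hcch, hsc⟩
    obtain ⟨T, hTc, hsub⟩ := chain_max hcne hcch
    exact chain_bary_indep (hF.indep T (hcF hTc)) hcch hsub
      (fun u hu => hF.nonempty u (hcF hu)) hsc
  · rintro s ⟨c, hcF, hcne, hcch, hsc⟩ t hts htne
    refine ⟨c.filter (fun u => bary u ∈ t), ?_, ?_, ?_, ?_⟩
    · exact fun u hu => hcF (Finset.mem_coe.mpr ((Finset.filter_subset _ c) (Finset.mem_coe.mp hu)))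
    · obtain ⟨p, hpt⟩ := htne
      have hps : p ∈ s := hts hpt
      have : (p : E) ∈ (↑s : Set E) := Finset.mem_coe.mpr hps
      rw [hsc] at this
      obtain ⟨u, huc, hup⟩ := this
      exact ⟨u, Finset.mem_filter.mpr ⟨huc, hup ▸ hpt⟩⟩
    · exact hcch.mono (by exact_mod_cast Finset.filter_subset _ c)
    · apply Set.Subset.antisymm
      · intro p hpt
        have hps : p ∈ (↑s : Set E) := Finset.coe_subset.mpr hts hpt
        rw [hsc] at hps
        obtain ⟨u, huc, hup⟩ := hps
        exact ⟨u, Finset.mem_coe.mpr (Finset.mem_filter.mpr ⟨huc, hup ▸ hpt⟩), hup⟩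
      · rintro p ⟨u, huc, hup⟩
        have := Finset.mem_filter.mp (Finset.mem_coe.mp huc)
        exact hup ▸ this.2
  · rintro σ ⟨c, hcF, hcne, hcch, hsc⟩ τ ⟨c', hcF', hcne', hcch', hsc'⟩ ⟨x, hxσ, hxτ⟩
    obtain ⟨T, lam, hTc, hsub, hpos, h1, h2, hxT⟩ := chain_repr hF hcF hcne hcch hsc hxσ
    obtain ⟨T', lam', hTc', hsub', hpos', h1', h2', hxT'⟩ := chain_repr hF hcF' hcne' hcch' hsc' hxτ
    have hTT : T = T' := hF.disj T (hcF hTc) T' (hcF' hTc') ⟨x, hxT, hxT'⟩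
    subst hTT
    have hne : ∀ s ∈ c, s.Nonempty := fun s hs => hF.nonempty s (hcF hs)
    have hne' : ∀ s ∈ c', s.Nonempty := fun s hs => hF.nonempty s (hcF' hs)
    set W : E → ℝ := fun v => ∑ s ∈ c.filter (fun s => v ∈ s), lam s / s.card with hWdef
    set W' : E → ℝ := fun v => ∑ s ∈ c'.filter (fun s => v ∈ s), lam' s / s.card with hW'def
    have hWW' : ∀ v ∈ T, W v = W' v := by
      apply coords_unique (hF.indep T (hcF hTc))
      · rw [hWdef, ← swap_sum' T hsub hne lam, h1]
      · rw [hW'def, ← swap_sum' T hsub' hne' lam', h1']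
      · rw [hWdef, hW'def, ← swap_sum T hsub hne lam, ← swap_sum T hsub' hne' lam', h2, h2']
    have hcc' : c = c' := by
      apply Finset.Subset.antisymm
      · intro s hs
        obtain ⟨v₀, hv₀, hsep⟩ := chain_sep hcch hs (hne s hs)
        have hv₀T : v₀ ∈ T := hsub s hs hv₀
        have heq1 : s = T.filter (fun v => W v₀ ≤ W v) :=
          level_eq hcch hsub hne lam hpos W (fun v _ => rfl) hs hv₀ hsep
        have heq2 : T.filter (fun v => W v₀ ≤ W v) = T.filter (fun v => W' v₀ ≤ W' v) :=
          Finset.filter_congr (fun v hv => by rw [hWW' v hv, hWW' v₀ hv₀T])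
        rw [heq1, heq2]
        exact level_mem hcch' hsub' hne' lam' hpos' W' (fun v _ => rfl) hTc' hv₀T
      · intro s hs
        obtain ⟨v₀, hv₀, hsep⟩ := chain_sep hcch' hs (hne' s hs)
        have hv₀T : v₀ ∈ T := hsub' s hs hv₀
        have heq1 : s = T.filter (fun v => W' v₀ ≤ W' v) :=
          level_eq hcch' hsub' hne' lam' hpos' W' (fun v _ => rfl) hs hv₀ hsep
        have heq2 : T.filter (fun v => W' v₀ ≤ W' v) = T.filter (fun v => W v₀ ≤ W v) :=
          Finset.filter_congr (fun v hv => by rw [hWW' v hv, hWW' v₀ hv₀T])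
        rw [heq1, heq2]
        exact level_mem hcch hsub hne lam hpos W (fun v _ => rfl) hTc hv₀T
    apply Finset.coe_injective
    rw [hsc, hsc', hcc']

theorem dist_bary_vertex_le {s : Finset E} (hn : s.Nonempty) {v : E} (hv : v ∈ s) :
    dist (bary s) v ≤ (1 - (s.card : ℝ)⁻¹) * Metric.diam (↑s : Set E) := by
  have hcard : (0:ℝ) < s.card := by exact_mod_cast Finset.card_pos.mpr hn
  have hdiff : bary s - v = ∑ u ∈ s, (s.card : ℝ)⁻¹ • (u - v) := by
    rw [bary_eq_sum hn]
    rw [Finset.sum_congr rfl (fun u _ => smul_sub ((s.card:ℝ)⁻¹) u v), Finset.sum_sub_distrib]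
    congr 1
    rw [← Finset.sum_smul, bary_coords_sum hn, one_smul]
  rw [dist_eq_norm, hdiff]
  calc ‖∑ u ∈ s, (s.card : ℝ)⁻¹ • (u - v)‖ ≤ ∑ u ∈ s, ‖(s.card : ℝ)⁻¹ • (u - v)‖ :=
        norm_sum_le _ _
    _ = ∑ u ∈ s.erase v, ‖(s.card : ℝ)⁻¹ • (u - v)‖ := by
        rw [Finset.sum_erase _ (by simp)]
    _ ≤ ∑ _u ∈ s.erase v, (s.card : ℝ)⁻¹ * Metric.diam (↑s : Set E) := by
        refine Finset.sum_le_sum (fun u hu => ?_)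
        rw [norm_smul, Real.norm_eq_abs, abs_of_nonneg (inv_nonneg.mpr hcard.le)]
        refine mul_le_mul_of_nonneg_left ?_ (inv_nonneg.mpr hcard.le)
        rw [← dist_eq_norm]
        exact Metric.dist_le_diam_of_mem s.finite_toSet.isBounded
          (Finset.mem_coe.mpr (Finset.mem_of_mem_erase hu)) (Finset.mem_coe.mpr hv)
    _ = (1 - (s.card : ℝ)⁻¹) * Metric.diam (↑s : Set E) := by
        rw [Finset.sum_const, nsmul_eq_mul, Finset.card_erase_of_mem hv]
        have h1 : 1 ≤ s.card := Finset.card_pos.mpr hn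
        rw [Nat.cast_sub h1]
        have : (s.card : ℝ) ≠ 0 := hcard.ne'
        push_cast
        field_simp

theorem dist_bary_pt_le {s : Finset E} (hn : s.Nonempty) {x : E}
    (hx : x ∈ convexHull ℝ (↑s : Set E)) :
    dist (bary s) x ≤ (1 - (s.card : ℝ)⁻¹) * Metric.diam (↑s : Set E) := by
  obtain ⟨y, hy, hley⟩ := (convexOn_dist (bary s)
    (convex_convexHull ℝ (↑s : Set E))).exists_ge_of_mem_convexHull
    (subset_convexHull ℝ _) hx
  calc dist (bary s) x = dist x (bary s) := dist_comm _ _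
    _ ≤ dist y (bary s) := hley
    _ = dist (bary s) y := dist_comm _ _
    _ ≤ _ := dist_bary_vertex_le hn hy

theorem mesh_sd {Fs : Set (Finset E)} (hF : Cx Fs) {D : ℕ} (hD : 1 ≤ D)
    (hcard : ∀ s ∈ Fs, s.card ≤ D) {r : ℝ} (hr : 0 ≤ r)
    (hmesh : ∀ s ∈ Fs, Metric.diam (↑s : Set E) ≤ r) :
    ∀ t ∈ sd Fs, Metric.diam (↑t : Set E) ≤ (1 - (D:ℝ)⁻¹) * r := by
  have hθ0 : (0:ℝ) ≤ 1 - (D:ℝ)⁻¹ := by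
    have : (D:ℝ)⁻¹ ≤ 1 := by
      rw [inv_le_one_iff₀]
      right; exact_mod_cast hD
    linarith
  rintro t ⟨c, hcF, hcne, hcch, htc⟩
  have key : ∀ u ∈ c, ∀ u' ∈ c, u ⊆ u' → dist (bary u) (bary u') ≤ (1 - (D:ℝ)⁻¹) * r := by
    intro u hu u' hu' huu
    have hu'F : u' ∈ Fs := hcF hu'
    have hn' : u'.Nonempty := hF.nonempty u' hu'F
    have hn : u.Nonempty := hF.nonempty u (hcF hu)
    have h1 : dist (bary u') (bary u) ≤ (1 - (u'.card : ℝ)⁻¹) * Metric.diam (↑u' : Set E) :=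
      dist_bary_pt_le hn' (convexHull_mono (Finset.coe_subset.mpr huu) (bary_mem_convexHull hn))
    rw [dist_comm]
    refine h1.trans (mul_le_mul ?_ (hmesh u' hu'F) Metric.diam_nonneg hθ0)
    have hc1 : (1:ℝ) ≤ u'.card := by exact_mod_cast Finset.card_pos.mpr hn'
    have hcD : (u'.card : ℝ) ≤ D := by exact_mod_cast hcard u' hu'F
    have := inv_anti₀ (by linarith : (0:ℝ) < u'.card) hcD
    linarith
  apply Metric.diam_le_of_forall_dist_le (mul_nonneg hθ0 hr)
  intro p hp q hq
  rw [htc] at hp hq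
  obtain ⟨u, hu, rfl⟩ := hp
  obtain ⟨u', hu', rfl⟩ := hq
  by_cases he : u = u'
  · subst he; simp [mul_nonneg hθ0 hr]
  · rcases hcch hu hu' he with h | h
    · exact key u hu u' hu' h
    · rw [dist_comm]; exact key u' hu' u hu h

theorem cardLe_sd {Fs : Set (Finset E)} (hF : Cx Fs) {D : ℕ}
    (hcard : ∀ s ∈ Fs, s.card ≤ D) : ∀ t ∈ sd Fs, t.card ≤ D := by
  rintro t ⟨c, hcF, hcne, hcch, htc⟩
  obtain ⟨T, hTc, hsub⟩ := chain_max hcne hcch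
  have htimg : t = c.image bary := Finset.coe_injective (by rw [Finset.coe_image, htc])
  have hinj : ∀ x ∈ c, ∀ y ∈ c, Finset.card x = Finset.card y → x = y := by
    intro a ha b hb hab
    by_contra hne
    rcases hcch ha hb hne with h | h
    · exact absurd hab (Nat.ne_of_lt (Finset.card_lt_card (lt_of_le_of_ne h hne)))
    · exact absurd hab.symm (Nat.ne_of_lt (Finset.card_lt_card (lt_of_le_of_ne h (Ne.symm hne))))
  have h1 : c.card = (c.image Finset.card).card := (Finset.card_image_of_injOn hinj).symm
  have h2 : c.image Finset.card ⊆ Finset.Icc 1 T.card := by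
    intro k hk
    obtain ⟨a, ha, rfl⟩ := Finset.mem_image.mp hk
    exact Finset.mem_Icc.mpr ⟨Finset.card_pos.mpr (hF.nonempty a (hcF ha)),
      Finset.card_le_card (hsub a ha)⟩
  calc t.card = (c.image bary).card := by rw [htimg]
    _ ≤ c.card := Finset.card_image_le
    _ ≤ (Finset.Icc 1 T.card).card := h1 ▸ Finset.card_le_card h2
    _ = T.card := by rw [Nat.card_Icc, Nat.add_sub_cancel]
    _ ≤ D := hcard T (hcF hTc)

theorem sub_sd {Fs : Set (Finset E)} (hF : Cx Fs) {A : Set (Finset E)}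
    (hA : ∀ s ∈ Fs, ∃ T ∈ A, (↑s : Set E) ⊆ convexHull ℝ (↑T : Set E)) :
    ∀ s ∈ sd Fs, ∃ T ∈ A, (↑s : Set E) ⊆ convexHull ℝ (↑T : Set E) := by
  rintro t ⟨c, hcF, hcne, hcch, htc⟩
  obtain ⟨S, hSc, hsub⟩ := chain_max hcne hcch
  obtain ⟨T, hTA, hST⟩ := hA S (hcF hSc)
  refine ⟨T, hTA, ?_⟩
  intro p hp
  rw [htc] at hp
  obtain ⟨u, hu, rfl⟩ := hp
  have h1 : bary u ∈ convexHull ℝ (↑u : Set E) :=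
    bary_mem_convexHull (hF.nonempty u (hcF hu))
  have h2 : convexHull ℝ (↑u : Set E) ⊆ convexHull ℝ (↑S : Set E) :=
    convexHull_mono (Finset.coe_subset.mpr (hsub u hu))
  have h3 : convexHull ℝ (↑S : Set E) ⊆ convexHull ℝ (↑T : Set E) :=
    convexHull_min hST (convex_convexHull ℝ _)
  exact h3 (h2 h1)

theorem relInt_singleton (v : E) : relInt ({v} : Finset E) = {v} := by
  apply Set.Subset.antisymm
  · intro x hx
    have := relInt_subset hx
    rwa [Finset.coe_singleton, convexHull_singleton] at this
  · intro x hx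
    rw [Set.mem_singleton_iff] at hx
    subst hx
    constructor
    · rw [Finset.coe_singleton, convexHull_singleton]; rfl
    · intro hb
      obtain ⟨t, hts, hxt⟩ := mem_relBdry_iff.mp hb
      rw [Finset.ssubset_singleton_iff.mp hts] at hxt
      simp at hxt

theorem star_eq (K : SimpComplex E) (u : E) :
    starOf (↑K.faces : Set (Finset E)) u =
      (⋃ t ∈ {t : Finset E | t ∈ K.faces ∧ u ∉ t}, convexHull ℝ (↑t : Set E))ᶜ ∩
        polyh (↑K.faces : Set (Finset E)) := by
  apply Set.Subset.antisymm
  · rintro x hx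
    rw [starOf, Set.mem_iUnion₂] at hx
    obtain ⟨σ, hm, hxσ⟩ := hx
    obtain ⟨hσ, huσ⟩ := hm
    refine ⟨fun hxN => ?_, ?_⟩
    · rw [Set.mem_iUnion₂] at hxN
      obtain ⟨t, htm, hxt⟩ := hxN
      exact htm.2 (subset_of_relInt_mem K hσ htm.1 hxσ hxt huσ)
    · exact Set.mem_biUnion hσ (relInt_subset hxσ)
  · rintro x ⟨hxc, hxp⟩
    obtain ⟨τ, hτ, hxτ⟩ := carrier_exists (cx_simpComplex K) hxp
    have huτ : u ∈ τ := by
      by_contra hu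
      exact hxc (Set.mem_iUnion₂.mpr ⟨τ, ⟨hτ, hu⟩, relInt_subset hxτ⟩)
    rw [starOf]
    exact Set.mem_iUnion₂.mpr ⟨τ, ⟨hτ, huτ⟩, hxτ⟩

theorem mem_starOf {Fs : Set (Finset E)} {v x : E} :
    x ∈ starOf Fs v ↔ ∃ s, (s ∈ Fs ∧ v ∈ s) ∧ x ∈ relInt s := by
  rw [starOf, Set.mem_iUnion₂]
  exact ⟨fun ⟨s, hm, hx⟩ => ⟨s, hm, hx⟩, fun ⟨s, hm, hx⟩ => ⟨s, hm, hx⟩⟩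

end SAux


open SAux

/-- finite simplicial approximation theorem. -/
theorem stmt_7 {n m : ℕ} (K : SimpComplex (Euc n)) (L : SimpComplex (Euc m)) (f : Euc n → Euc m)
    (hf : ContinuousOn f (polyh (↑K.faces : Set (Finset (Euc n)))))
    (hfim : f '' polyh (↑K.faces : Set (Finset (Euc n))) ⊆
      polyh (↑L.faces : Set (Finset (Euc m)))) :
    ∃ (κ : ℕ) (h : Euc n → Euc m),
      IsSimplicialApprox (sdIter (↑K.faces : Set (Finset (Euc n))) κ)
        (↑L.faces : Set (Finset (Euc m))) f h := by
  classical
  by_cases hKe : K.faces = ∅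
  · have hemp : sdIter (↑K.faces : Set (Finset (Euc n))) 0 = (∅ : Set (Finset (Euc n))) := by
      show (↑K.faces : Set (Finset (Euc n))) = ∅
      rw [hKe]; exact Finset.coe_empty
    refine ⟨0, fun _ => 0, ⟨⟨?_, ?_⟩, ?_⟩⟩
    · intro s hs w _ _
      rw [hemp] at hs
      exact absurd hs (Set.notMem_empty s)
    · intro s hs
      rw [hemp] at hs
      exact absurd hs (Set.notMem_empty s)
    · intro v hv
      obtain ⟨s, hs, _⟩ := hv
      rw [hemp] at hs
      exact absurd hs (Set.notMem_empty s)
  have hKne : (K.faces).Nonempty := Finset.nonempty_iff_ne_empty.mpr hKe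
  set KF : Set (Finset (Euc n)) := ↑K.faces with hKF
  set X := polyh KF with hXdef
  have hXcomp : IsCompact X := by
    rw [hXdef, polyh]
    exact K.faces.finite_toSet.isCompact_biUnion
      (fun s _ => (s.finite_toSet).isCompact_convexHull ℝ)
  have cxL := cx_simpComplex L
  set V : Euc m → Set (Euc m) := fun u =>
    (⋃ t ∈ {t : Finset (Euc m) | t ∈ L.faces ∧ u ∉ t}, convexHull ℝ (↑t : Set (Euc m)))ᶜ with hV
  have hVopen : ∀ u, IsOpen (V u) := by
    intro u
    rw [hV]
    apply isOpen_compl_iff.mpr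
    apply Set.Finite.isClosed_biUnion
    · exact (L.faces.finite_toSet).subset (fun t ht => ht.1)
    · exact fun t _ => (t.finite_toSet).isClosed_convexHull ℝ
  have hstarV : ∀ u, starOf (↑L.faces : Set (Finset (Euc m))) u = V u ∩ polyh (↑L.faces) :=
    fun u => star_eq L u
  have hWex : ∀ u : Euc m, ∃ Wu : Set (Euc n), IsOpen Wu ∧ f ⁻¹' (V u) ∩ X = Wu ∩ X :=
    fun u => (_root_.continuousOn_iff'.mp hf) (V u) (hVopen u)
  choose W hWopen hWeq using hWex
  have hcover : X ⊆ ⋃ u, W u := by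
    intro x hxX
    have hfx : f x ∈ polyh (↑L.faces : Set (Finset (Euc m))) := hfim ⟨x, hxX, rfl⟩
    obtain ⟨τ, hτ, hxτ⟩ := carrier_exists cxL hfx
    obtain ⟨u, hu⟩ := cxL.nonempty τ hτ
    have hst : f x ∈ starOf (↑L.faces : Set (Finset (Euc m))) u :=
      mem_starOf.mpr ⟨τ, ⟨hτ, hu⟩, hxτ⟩
    rw [hstarV u] at hst
    have hxW : x ∈ W u ∩ X := by rw [← hWeq u]; exact ⟨hst.1, hxX⟩
    exact Set.mem_iUnion.mpr ⟨u, hxW.1⟩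
  obtain ⟨δ, hδ, hleb⟩ := lebesgue_number_lemma_of_metric hXcomp hWopen hcover
  set D : ℕ := (K.faces.image Finset.card).max' (Finset.image_nonempty.mpr hKne) with hD
  have hcardD : ∀ s ∈ K.faces, s.card ≤ D := by
    intro s hs
    rw [hD]
    exact Finset.le_max' _ _ (Finset.mem_image_of_mem _ hs)
  have hD1 : 1 ≤ D := by
    obtain ⟨s, hs⟩ := hKne
    exact le_trans (Finset.card_pos.mpr (K.nonempty_mem s hs)) (hcardD s hs)
  have hMne : (K.faces.image (fun s : Finset (Euc n) =>
      Metric.diam (↑s : Set (Euc n)))).Nonempty := Finset.image_nonempty.mpr hKne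
  set M : ℝ := (K.faces.image (fun s : Finset (Euc n) =>
    Metric.diam (↑s : Set (Euc n)))).max' hMne with hM
  have hMe : ∀ s ∈ K.faces, Metric.diam (↑s : Set (Euc n)) ≤ M := by
    intro s hs
    rw [hM]
    exact Finset.le_max' _ (Metric.diam (↑s : Set (Euc n)))
      (Finset.mem_image_of_mem (fun s : Finset (Euc n) => Metric.diam (↑s : Set (Euc n))) hs)
  have hM0 : 0 ≤ M := by
    obtain ⟨s, hs⟩ := hKne
    exact le_trans Metric.diam_nonneg (hMe s hs)
  set θ : ℝ := 1 - (D : ℝ)⁻¹ with hθ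
  have hDpos : (0:ℝ) < D := by exact_mod_cast Nat.lt_of_lt_of_le Nat.zero_lt_one hD1
  have hθ0 : 0 ≤ θ := by
    have : (D:ℝ)⁻¹ ≤ 1 := by
      rw [inv_le_one_iff₀]; right; exact_mod_cast hD1
    rw [hθ]; linarith
  have hθ1 : θ < 1 := by
    have : (0:ℝ) < (D:ℝ)⁻¹ := inv_pos.mpr hDpos
    rw [hθ]; linarith
  obtain ⟨κ, hκ⟩ := exists_pow_lt_of_lt_one (div_pos hδ (by linarith : (0:ℝ) < M + 1)) hθ1
  have hκM : θ ^ κ * M < δ := by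
    have h1 : θ ^ κ * M ≤ θ ^ κ * (M + 1) :=
      mul_le_mul_of_nonneg_left (by linarith) (pow_nonneg hθ0 κ)
    have h2 : θ ^ κ * (M + 1) < δ := (lt_div_iff₀ (by linarith : (0:ℝ) < M + 1)).mp hκ
    linarith
  have hinv : ∀ j : ℕ, Cx (sdIter KF j) ∧ (∀ s ∈ sdIter KF j, s.card ≤ D) ∧
      (∀ s ∈ sdIter KF j, ∃ T ∈ KF, (↑s : Set (Euc n)) ⊆ convexHull ℝ (↑T : Set (Euc n))) ∧
      (∀ s ∈ sdIter KF j, Metric.diam (↑s : Set (Euc n)) ≤ θ ^ j * M) := by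
    intro j
    induction j with
    | zero =>
      have h0 : sdIter KF 0 = KF := rfl
      rw [h0]
      refine ⟨cx_simpComplex K, fun s hs => hcardD s hs,
        fun s hs => ⟨s, hs, subset_convexHull ℝ _⟩, fun s hs => ?_⟩
      rw [pow_zero, one_mul]
      exact hMe s hs
    | succ j ih =>
      obtain ⟨hcx, hcard, hsub, hmesh⟩ := ih
      have hstep : sdIter KF (j + 1) = sd (sdIter KF j) := by
        show sd^[j + 1] KF = sd (sd^[j] KF)
        exact Function.iterate_succ_apply' sd j KF
      rw [hstep]
      refine ⟨cx_sd hcx, cardLe_sd hcx hcard, sub_sd hcx hsub, fun s hs => ?_⟩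
      have hm := mesh_sd hcx hD1 hcard (mul_nonneg (pow_nonneg hθ0 j) hM0) hmesh s hs
      calc Metric.diam (↑s : Set (Euc n)) ≤ (1 - (D:ℝ)⁻¹) * (θ ^ j * M) := hm
        _ = θ ^ (j + 1) * M := by rw [← hθ]; ring
  obtain ⟨hFcx, hFcard, hFsub, hFmesh⟩ := hinv κ
  set Fs := sdIter KF κ with hFsdef
  have hmeshδ : ∀ s ∈ Fs, Metric.diam (↑s : Set (Euc n)) < δ :=
    fun s hs => lt_of_le_of_lt (hFmesh s hs) hκM
  have hhullX : ∀ s ∈ Fs, convexHull ℝ (↑s : Set (Euc n)) ⊆ X := by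
    intro s hs
    obtain ⟨T, hT, hsT⟩ := hFsub s hs
    intro y hy
    have hsTT : convexHull ℝ (↑s : Set (Euc n)) ⊆ convexHull ℝ (↑T : Set (Euc n)) :=
      convexHull_min hsT (convex_convexHull ℝ _)
    exact Set.mem_biUnion hT (hsTT hy)
  have hvertX : ∀ v ∈ vertices Fs, v ∈ X := by
    rintro v ⟨s, hs, hvs⟩
    exact hhullX s hs (subset_convexHull ℝ _ hvs)
  have hstarX : ∀ v, starOf Fs v ⊆ X := by
    intro v x hx
    obtain ⟨s, ⟨hs, _⟩, hxs⟩ := mem_starOf.mp hx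
    exact hhullX s hs (relInt_subset hxs)
  have hstarBall : ∀ v, ∀ x ∈ starOf Fs v, dist x v < δ := by
    intro v x hx
    obtain ⟨s, ⟨hs, hvs⟩, hxs⟩ := mem_starOf.mp hx
    have hb : Bornology.IsBounded (convexHull ℝ (↑s : Set (Euc n))) :=
      ((s.finite_toSet).isCompact_convexHull ℝ).isBounded
    have hd : dist x v ≤ Metric.diam (convexHull ℝ (↑s : Set (Euc n))) :=
      Metric.dist_le_diam_of_mem hb (relInt_subset hxs) (subset_convexHull ℝ _ hvs)
    rw [convexHull_diam] at hd
    exact lt_of_le_of_lt hd (hmeshδ s hs)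
  have hu : ∀ v : Euc n, ∃ u : Euc m, v ∈ vertices Fs →
      f '' starOf Fs v ⊆ starOf (↑L.faces : Set (Finset (Euc m))) u := by
    intro v
    by_cases hv : v ∈ vertices Fs
    · obtain ⟨u, hball⟩ := hleb v (hvertX v hv)
      refine ⟨u, fun _ => ?_⟩
      rintro y ⟨x, hx, rfl⟩
      have hxX : x ∈ X := hstarX v hx
      have hxW : x ∈ W u ∩ X := ⟨hball (Metric.mem_ball.mpr (hstarBall v x hx)), hxX⟩
      rw [← hWeq u] at hxW
      have hfx : f x ∈ polyh (↑L.faces : Set (Finset (Euc m))) := hfim ⟨x, hxX, rfl⟩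
      rw [hstarV u]
      exact ⟨hxW.1, hfx⟩
    · exact ⟨0, fun hcon => absurd hcon hv⟩
  choose hvF hvSpec using hu
  have hsel : ∀ x : Euc n, ∃ σ : Finset (Euc n), ∃ w : Euc n → ℝ,
      x ∈ polyh Fs → (σ ∈ Fs ∧ (∀ v ∈ σ, 0 < w v) ∧ (∑ v ∈ σ, w v = 1) ∧
        (∑ v ∈ σ, w v • v = x) ∧ x ∈ relInt σ) := by
    intro x
    by_cases hx : x ∈ polyh Fs
    · obtain ⟨σ, hσ, hxσ⟩ := carrier_exists hFcx hx
      obtain ⟨w, hw1, hw2, hw3⟩ := pos_coords_of_mem_relInt (hFcx.indep σ hσ) hxσ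
      exact ⟨σ, w, fun _ => ⟨hσ, hw1, hw2, hw3, hxσ⟩⟩
    · exact ⟨∅, 0, fun hcon => absurd hcon hx⟩
  choose σx wx hxspec using hsel
  have hkey : ∀ x : Euc n, ∀ σ' ∈ Fs, x ∈ relInt σ' → σx x = σ' := by
    intro x σ' hσ' hxσ'
    have hxP : x ∈ polyh Fs := Set.mem_biUnion hσ' (relInt_subset hxσ')
    obtain ⟨h1, _, _, _, h5⟩ := hxspec x hxP
    exact hFcx.disj _ h1 _ hσ' ⟨x, h5, hxσ'⟩
  have hvertval : ∀ v ∈ vertices Fs, (∑ u ∈ σx v, wx v u • hvF u) = hvF v := by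
    rintro v ⟨s, hs, hvs⟩
    have hsingF : ({v} : Finset (Euc n)) ∈ Fs :=
      hFcx.down s hs {v} (Finset.singleton_subset_iff.mpr hvs) (Finset.singleton_nonempty v)
    have hvrel : v ∈ relInt ({v} : Finset (Euc n)) := by
      rw [relInt_singleton]; exact Set.mem_singleton v
    have hσv : σx v = {v} := hkey v {v} hsingF hvrel
    have hvP : v ∈ polyh Fs := Set.mem_biUnion hsingF (relInt_subset hvrel)
    obtain ⟨_, _, hw2, _, _⟩ := hxspec v hvP
    rw [hσv] at hw2 ⊢
    rw [Finset.sum_singleton] at hw2 ⊢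
    rw [hw2, one_smul]
  refine ⟨κ, fun x => ∑ v ∈ σx x, wx x v • hvF v, ⟨⟨?_, ?_⟩, ?_⟩⟩
  · -- piecewise affine
    intro s hs w h0 h1
    obtain ⟨htF, htpos, htsum, htvec, htrel⟩ := support_lemma hFcx hs h0 h1
    set t := s.filter (fun v => w v ≠ 0) with ht
    set x₀ := ∑ v ∈ s, w v • v with hx₀
    have hσx : σx x₀ = t := hkey x₀ t htF htrel
    have hx₀P : x₀ ∈ polyh Fs := Set.mem_biUnion htF (relInt_subset htrel)
    obtain ⟨_, hwpos, hwsum, hwvec, _⟩ := hxspec x₀ hx₀P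
    rw [hσx] at hwsum hwvec
    have hcu : ∀ v ∈ t, wx x₀ v = w v :=
      coords_unique (hFcx.indep t htF) hwsum htsum (by rw [hwvec, htvec])
    show (∑ v ∈ σx x₀, wx x₀ v • hvF v) = ∑ v ∈ s, w v • (∑ u ∈ σx v, wx v u • hvF u)
    rw [hσx]
    calc ∑ v ∈ t, wx x₀ v • hvF v = ∑ v ∈ t, w v • hvF v :=
          Finset.sum_congr rfl (fun v hv => by rw [hcu v hv])
      _ = ∑ v ∈ s, w v • hvF v := by
          rw [ht]
          exact Finset.sum_filter_of_ne (fun v _ hne => by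
            intro h0'; rw [h0', zero_smul] at hne; exact hne rfl)
      _ = ∑ v ∈ s, w v • (∑ u ∈ σx v, wx v u • hvF u) :=
          Finset.sum_congr rfl (fun v hv => by rw [hvertval v ⟨s, hs, hv⟩])
  · -- simplicial image
    intro s hs
    have hsne : s.Nonempty := hFcx.nonempty s hs
    have hb : bary s ∈ relInt s := bary_mem_relInt hsne (hFcx.indep s hs)
    have hsigma : ∀ v ∈ s, ∃ σ, (σ ∈ (↑L.faces : Set (Finset (Euc m))) ∧ hvF v ∈ σ) ∧
        f (bary s) ∈ relInt σ := by
      intro v hv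
      have hst := hvSpec v ⟨s, hs, hv⟩ ⟨bary s, mem_starOf.mpr ⟨s, ⟨hs, hv⟩, hb⟩, rfl⟩
      exact mem_starOf.mp hst
    have hsne' := hsne
    obtain ⟨v₁, hv₁⟩ := hsne'
    obtain ⟨σ₁, ⟨hσ₁L, _⟩, hfσ₁⟩ := hsigma v₁ hv₁
    have hall : ∀ v ∈ s, hvF v ∈ σ₁ := by
      intro v hv
      obtain ⟨σ, ⟨hσL, hvσ⟩, hfσ⟩ := hsigma v hv
      have heq : σ = σ₁ := cxL.disj σ hσL σ₁ hσ₁L ⟨f (bary s), hfσ, hfσ₁⟩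
      exact heq ▸ hvσ
    refine ⟨s.image hvF, ?_, ?_⟩
    · have himgsub : s.image hvF ⊆ σ₁ := Finset.image_subset_iff.mpr hall
      have himgne : (s.image hvF).Nonempty := Finset.image_nonempty.mpr hsne
      exact L.down_closed σ₁ hσ₁L _ himgsub himgne
    · rw [Finset.coe_image]
      apply Set.image_congr
      intro a ha
      exact hvertval a ⟨s, hs, ha⟩
  · -- star condition
    intro v hv
    have hval : (∑ u ∈ σx v, wx v u • hvF u) = hvF v := hvertval v hv
    show f '' starOf Fs v ⊆ starOf (↑L.faces : Set (Finset (Euc m))) (∑ u ∈ σx v, wx v u • hvF u)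
    rw [hval]
    exact hvSpec v hv
end
end

section
/- With the notation of the induced map h* on a subdivision K* of K: if h : |K| → |L| is a simplicial approximation of a continuous map f : |K| → |L|, then h* : |K*| → |L| is also a simplicial approximation of f. -/
open Set Finset Metric

noncomputable section

namespace Paper

variable {E : Type*} {F : Type*}

section AuxLemmas

variable {E : Type*} [AddCommGroup E] [Module ℝ E]

variable {E : Type*} [AddCommGroup E] [Module ℝ E]

lemma coords_unique {t : Finset E} (ht : AffineIndependent ℝ ((↑) : t → E))
    {w w' : E → ℝ} (hw : ∑ a ∈ t, w a = 1) (hw' : ∑ a ∈ t, w' a = 1)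
    (h : ∑ a ∈ t, w a • a = ∑ a ∈ t, w' a • a) : ∀ a ∈ t, w a = w' a := by
  have h1 : ∑ i : ↥t, w ↑i = 1 := by rw [Finset.sum_coe_sort]; exact hw
  have h1' : ∑ i : ↥t, w' ↑i = 1 := by rw [Finset.sum_coe_sort]; exact hw'
  have hcomb : (Finset.univ.affineCombination ℝ ((↑) : t → E) (fun i => w ↑i)) =
      Finset.univ.affineCombination ℝ ((↑) : t → E) (fun i => w' ↑i) := by
    rw [Finset.affineCombination_eq_linear_combination _ _ _ h1,
        Finset.affineCombination_eq_linear_combination _ _ _ h1',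
        Finset.sum_coe_sort t (fun a => w a • a), Finset.sum_coe_sort t (fun a => w' a • a)]
    exact h
  have hind := ht.indicator_eq_of_affineCombination_eq Finset.univ Finset.univ _ _ h1 h1' hcomb
  intro a ha
  have := congrFun hind ⟨a, ha⟩
  simpa using this

lemma support_subset_of_mem_hull {t u : Finset E} (ht : AffineIndependent ℝ ((↑) : t → E))
    (hut : u ⊆ t) {w : E → ℝ} {x : E}
    (hw1 : ∑ a ∈ t, w a = 1) (hwx : ∑ a ∈ t, w a • a = x)
    (hx : x ∈ convexHull ℝ (↑u : Set E)) : ∀ a ∈ t, a ∉ u → w a = 0 := by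
  classical
  obtain ⟨w', hw'0, hw'1, hw'x⟩ := Finset.mem_convexHull'.1 hx
  set w'' : E → ℝ := fun a => if a ∈ u then w' a else 0 with hw''def
  have hsum : ∑ a ∈ t, w'' a = 1 := by
    rw [← Finset.sum_subset hut (fun a _ hau => by simp [hw''def, hau])]
    rw [show ∑ a ∈ u, w'' a = ∑ a ∈ u, w' a from
      Finset.sum_congr rfl (fun a ha => by simp [hw''def, ha])]
    exact hw'1
  have hvec : ∑ a ∈ t, w'' a • a = x := by
    rw [← Finset.sum_subset hut (fun a _ hau => by simp [hw''def, hau])]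
    rw [show ∑ a ∈ u, w'' a • a = ∑ a ∈ u, w' a • a from
      Finset.sum_congr rfl (fun a ha => by simp [hw''def, ha])]
    exact hw'x
  have := coords_unique ht hw1 hsum (by rw [hwx, hvec])
  intro a hat hau
  rw [this a hat]
  simp [hw''def, hau]

lemma mem_hull_of_support_subset {t u : Finset E} (hut : u ⊆ t) {w : E → ℝ} {x : E}
    (hw0 : ∀ a ∈ t, 0 ≤ w a) (hw1 : ∑ a ∈ t, w a = 1) (hwx : ∑ a ∈ t, w a • a = x)
    (hz : ∀ a ∈ t, a ∉ u → w a = 0) : x ∈ convexHull ℝ (↑u : Set E) := by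
  rw [Finset.mem_convexHull']
  refine ⟨w, fun a ha => hw0 a (hut ha), ?_, ?_⟩
  · rw [Finset.sum_subset hut hz]; exact hw1
  · rw [Finset.sum_subset hut (fun a hat hau => by rw [hz a hat hau, zero_smul])]; exact hwx

lemma relBdry_mem {s u : Finset E} (hu : u ⊂ s) {x : E}
    (hx : x ∈ convexHull ℝ (↑u : Set E)) : x ∈ relBdry s := by
  simp only [relBdry, Set.mem_iUnion]
  exact ⟨u, hu, hx⟩

lemma carrier_lemma (K : SimpComplex E) {t : Finset E} (ht : t ∈ K.faces) {x : E}
    (hx : x ∈ convexHull ℝ (↑t : Set E)) :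
    ∃ τ ∈ K.faces, τ ⊆ t ∧ x ∈ relInt τ ∧
      ∀ t' ∈ K.faces, x ∈ convexHull ℝ (↑t' : Set E) → τ ⊆ t' := by
  classical
  obtain ⟨w, hw0, hw1, hwx⟩ := Finset.mem_convexHull'.1 hx
  set τ := t.filter (fun a => w a ≠ 0) with hτdef
  have hτt : τ ⊆ t := Finset.filter_subset _ _
  have hτne : ∀ a ∈ τ, w a ≠ 0 := fun a ha => (Finset.mem_filter.1 ha).2
  have hzero : ∀ a ∈ t, a ∉ τ → w a = 0 := by
    intro a hat haτ
    by_contra h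
    exact haτ (Finset.mem_filter.2 ⟨hat, h⟩)
  have hτ1 : ∑ a ∈ τ, w a = 1 := by rw [Finset.sum_subset hτt hzero]; exact hw1
  have hτx : ∑ a ∈ τ, w a • a = x := by
    rw [Finset.sum_subset hτt (fun a hat haτ => by rw [hzero a hat haτ, zero_smul])]
    exact hwx
  have hτnonempty : τ.Nonempty := by
    rw [Finset.nonempty_iff_ne_empty]
    intro h
    have h0 : ∑ a ∈ τ, w a = 0 := by rw [h]; simp
    rw [hτ1] at h0; norm_num at h0
  have hτf : τ ∈ K.faces := K.down_closed t ht τ hτt hτnonempty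
  have hxτ : x ∈ convexHull ℝ (↑τ : Set E) :=
    mem_hull_of_support_subset hτt hw0 hw1 hwx hzero
  refine ⟨τ, hτf, hτt, ⟨hxτ, ?_⟩, ?_⟩
  · -- x ∉ relBdry τ
    intro hbd
    simp only [relBdry, Set.mem_iUnion] at hbd
    obtain ⟨u, hu, hxu⟩ := hbd
    have hzu := support_subset_of_mem_hull (K.indep τ hτf) hu.subset hτ1 hτx hxu
    obtain ⟨a, haτ, hau⟩ := Finset.exists_of_ssubset hu
    exact hτne a haτ (hzu a haτ hau)
  · intro t' ht' hxt'
    have h1 : x ∈ convexHull ℝ ((↑τ : Set E) ∩ ↑t') :=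
      K.inter_subset τ hτf t' ht' ⟨hxτ, hxt'⟩
    rw [← Finset.coe_inter] at h1
    have hzu := support_subset_of_mem_hull (K.indep τ hτf)
      (Finset.inter_subset_left (s₂ := t')) hτ1 hτx h1
    intro a haτ
    by_contra hat'
    exact hτne a haτ (hzu a haτ (fun h => hat' (Finset.mem_inter.1 h).2))

lemma exists_minFace (K : SimpComplex E) {t : Finset E} (ht : t ∈ K.faces) {x : E}
    (hx : x ∈ convexHull ℝ (↑t : Set E)) :
    ∃ σ, IsMinContainingFace (↑K.faces : Set (Finset E)) x σ ∧ x ∈ relInt σ := by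
  obtain ⟨τ, hτf, _, hint, hmin⟩ := carrier_lemma K ht hx
  exact ⟨τ, ⟨hτf, hint.1, fun t' ht' hxt' => Finset.card_le_card (hmin t' ht' hxt')⟩, hint⟩

lemma minFace_subset (K : SimpComplex E) {ν : E} {σ : Finset E}
    (hσ : IsMinContainingFace (↑K.faces : Set (Finset E)) ν σ)
    {t : Finset E} (ht : t ∈ K.faces) (hν : ν ∈ convexHull ℝ (↑t : Set E)) : σ ⊆ t := by
  classical
  obtain ⟨hσf, hνσ, hmin⟩ := hσ
  have hσf' : σ ∈ K.faces := hσf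
  have h1 : ν ∈ convexHull ℝ ((↑σ : Set E) ∩ ↑t) := K.inter_subset σ hσf' t ht ⟨hνσ, hν⟩
  rw [← Finset.coe_inter] at h1
  have hne : (σ ∩ t).Nonempty := by
    rcases (σ ∩ t).eq_empty_or_nonempty with h | h
    · rw [h] at h1; simp at h1
    · exact h
  have hf : σ ∩ t ∈ K.faces := K.down_closed σ hσf' _ Finset.inter_subset_left hne
  have hcard : σ.card ≤ (σ ∩ t).card := hmin _ hf h1
  have heq : σ ∩ t = σ := Finset.eq_of_subset_of_card_le Finset.inter_subset_left hcard
  intro a ha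
  rw [← heq] at ha
  exact (Finset.mem_inter.1 ha).2

lemma relInt_coords {s : Finset E} (hs : AffineIndependent ℝ ((↑) : s → E)) {x : E}
    (hx : x ∈ relInt s) :
    ∃ c : E → ℝ, (∀ a ∈ s, 0 ≤ c a) ∧ (∀ a ∈ s, c a ≠ 0) ∧
      ∑ a ∈ s, c a = 1 ∧ ∑ a ∈ s, c a • a = x := by
  classical
  obtain ⟨hx1, hx2⟩ := hx
  obtain ⟨c, hc0, hc1, hcx⟩ := Finset.mem_convexHull'.1 hx1
  refine ⟨c, hc0, ?_, hc1, hcx⟩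
  intro a ha hca
  apply hx2
  refine relBdry_mem (Finset.erase_ssubset ha)
    (mem_hull_of_support_subset (Finset.erase_subset a s) hc0 hc1 hcx ?_)
  intro b hb hbe
  have hba : b = a := by
    by_contra h
    exact hbe (Finset.mem_erase.2 ⟨h, hb⟩)
  rw [hba]; exact hca

end AuxLemmas

end Paper

open Paper

/-- if `h` is a simplicial approximation of `f`, then the induced map `h*`
on a subdivision is also a simplicial approximation of `f`. -/
theorem stmt_11 {n m : ℕ} (K Kstar : SimpComplex (Euc n)) (L : SimpComplex (Euc m))
    (hsub : IsSubdivision K Kstar)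
    (r : Euc m → Euc m → Prop) (hr : IsLinearOrder (Euc m) r)
    (f h : Euc n → Euc m)
    (happ : IsSimplicialApprox (↑K.faces : Set (Finset (Euc n)))
      (↑L.faces : Set (Finset (Euc m))) f h)
    (hstar : Euc n → Euc m)
    (hdef : ∀ ν ∈ vertices (↑Kstar.faces : Set (Finset (Euc n))), ∀ σ : Finset (Euc n),
      IsMinContainingFace (↑K.faces : Set (Finset (Euc n))) ν σ →
        hstar ν ∈ h '' (↑σ : Set (Euc n)) ∧ ∀ y ∈ h '' (↑σ : Set (Euc n)), r (hstar ν) y)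
    (haff : IsPWAffineOn (↑Kstar.faces : Set (Finset (Euc n))) hstar) :
    IsSimplicialApprox (↑Kstar.faces : Set (Finset (Euc n)))
      (↑L.faces : Set (Finset (Euc m))) f hstar := by
  classical
  obtain ⟨⟨hPW, hmap⟩, hstarcond⟩ := happ
  obtain ⟨hpoly, hrefine⟩ := hsub
  constructor
  · refine ⟨haff, ?_⟩
    intro s hs
    obtain ⟨t, ht, hconv⟩ := hrefine s hs
    obtain ⟨t', ht', htt'⟩ := hmap t ht
    have key : ∀ ν ∈ s, hstar ν ∈ (↑t' : Set (Euc m)) := by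
      intro ν hν
      have hνv : ν ∈ vertices (↑Kstar.faces : Set (Finset (Euc n))) := ⟨s, hs, hν⟩
      have hνt : ν ∈ convexHull ℝ (↑t : Set (Euc n)) :=
        hconv (subset_convexHull ℝ _ hν)
      obtain ⟨σ, hσmin, hσint⟩ := exists_minFace K ht hνt
      obtain ⟨a, haσ, hae⟩ := (hdef ν hνv σ hσmin).1
      have haσt : a ∈ t := minFace_subset K hσmin ht hνt haσ
      rw [← htt']
      exact ⟨a, haσt, hae⟩
    refine ⟨Finset.image hstar s, ?_, ?_⟩
    · have hsub' : Finset.image hstar s ⊆ t' := by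
        intro y hy
        obtain ⟨ν, hν, rfl⟩ := Finset.mem_image.1 hy
        exact key ν hν
      have hne : (Finset.image hstar s).Nonempty := (Kstar.nonempty_mem s hs).image _
      exact L.down_closed t' ht' _ hsub' hne
    · rw [Finset.coe_image]
  · intro v hv
    obtain ⟨sv, hsv, hvsv⟩ := hv
    obtain ⟨t0, ht0, hconv0⟩ := hrefine sv hsv
    have hvt0 : v ∈ convexHull ℝ (↑t0 : Set (Euc n)) := hconv0 (subset_convexHull ℝ _ hvsv)
    obtain ⟨σ, hσmin, hσint⟩ := exists_minFace K ht0 hvt0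
    obtain ⟨a, haσ, hae⟩ := (hdef v ⟨sv, hsv, hvsv⟩ σ hσmin).1
    have ha_vert : a ∈ vertices (↑K.faces : Set (Finset (Euc n))) := ⟨σ, hσmin.1, haσ⟩
    have hstar_sub : starOf (↑Kstar.faces : Set (Finset (Euc n))) v ⊆
        starOf (↑K.faces : Set (Finset (Euc n))) a := by
      intro x hx
      simp only [starOf, Set.mem_iUnion] at hx ⊢
      obtain ⟨s, ⟨hsf, hvs⟩, hxint⟩ := hx
      obtain ⟨t, ht, hconv⟩ := hrefine s hsf
      have hxt : x ∈ convexHull ℝ (↑t : Set (Euc n)) := hconv hxint.1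
      obtain ⟨τ, hτf, hτt, hxτint, hτmin⟩ := carrier_lemma K ht hxt
      obtain ⟨c, hc0, hcne, hc1, hcx⟩ := relInt_coords (Kstar.indep s hsf) hxint
      have hsmem : ∀ b ∈ s, b ∈ convexHull ℝ (↑t : Set (Euc n)) :=
        fun b hb => hconv (subset_convexHull ℝ _ hb)
      have hverts : ∀ b : Euc n, ∃ wb : Euc n → ℝ, b ∈ convexHull ℝ (↑t : Set (Euc n)) →
          (∀ a' ∈ t, 0 ≤ wb a') ∧ ∑ a' ∈ t, wb a' = 1 ∧ ∑ a' ∈ t, wb a' • a' = b := by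
        intro b
        by_cases hb : b ∈ convexHull ℝ (↑t : Set (Euc n))
        · obtain ⟨wb, h1, h2, h3⟩ := Finset.mem_convexHull'.1 hb
          exact ⟨wb, fun _ => ⟨h1, h2, h3⟩⟩
        · exact ⟨0, fun h => absurd h hb⟩
      choose wfun hwfun using hverts
      have hW1 : ∑ a' ∈ t, (∑ b ∈ s, c b * wfun b a') = 1 := by
        rw [Finset.sum_comm]
        rw [show ∑ b ∈ s, ∑ a' ∈ t, c b * wfun b a' = ∑ b ∈ s, c b from
          Finset.sum_congr rfl fun b hb => by
            rw [← Finset.mul_sum, (hwfun b (hsmem b hb)).2.1, mul_one]]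
        exact hc1
      have hWx : ∑ a' ∈ t, (∑ b ∈ s, c b * wfun b a') • a' = x := by
        rw [show ∑ a' ∈ t, (∑ b ∈ s, c b * wfun b a') • a'
            = ∑ a' ∈ t, ∑ b ∈ s, c b • wfun b a' • a' from
          Finset.sum_congr rfl fun a' _ => by
            rw [Finset.sum_smul]
            exact Finset.sum_congr rfl fun b _ => by rw [mul_smul]]
        rw [Finset.sum_comm]
        rw [show ∑ b ∈ s, ∑ a' ∈ t, c b • wfun b a' • a' = ∑ b ∈ s, c b • b from
          Finset.sum_congr rfl fun b hb => by
            rw [← Finset.smul_sum, (hwfun b (hsmem b hb)).2.2]]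
        exact hcx
      have hWz : ∀ a' ∈ t, a' ∉ τ → (∑ b ∈ s, c b * wfun b a') = 0 :=
        support_subset_of_mem_hull (K.indep t ht) hτt hW1 hWx hxτint.1
      have hvz : ∀ a' ∈ t, a' ∉ τ → wfun v a' = 0 := by
        intro a' ha' haτ
        have h0 := hWz a' ha' haτ
        have hterm : ∀ b ∈ s, 0 ≤ c b * wfun b a' :=
          fun b hb => mul_nonneg (hc0 b hb) ((hwfun b (hsmem b hb)).1 a' ha')
        have hv0 := (Finset.sum_eq_zero_iff_of_nonneg hterm).1 h0 v hvs
        rcases mul_eq_zero.1 hv0 with h | h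
        · exact absurd h (hcne v hvs)
        · exact h
      have hvτ : v ∈ convexHull ℝ (↑τ : Set (Euc n)) :=
        mem_hull_of_support_subset hτt ((hwfun v (hsmem v hvs)).1)
          ((hwfun v (hsmem v hvs)).2.1) ((hwfun v (hsmem v hvs)).2.2) hvz
      have hστ : σ ⊆ τ := minFace_subset K hσmin hτf hvτ
      exact ⟨τ, ⟨hτf, hστ haσ⟩, hxτint⟩
    rw [← hae]
    exact (Set.image_mono (f := f) hstar_sub).trans (hstarcond a ha_vert)
end
end

section
/- Let L be a finite simplicial complex, Λ_L its set of maximal simplices of dimension ≥ 1, δ_L := min over τ ∈ Λ_L of dist(b_τ, ∂τ) (b_τ the barycenter), and for ε ∈ (0, δ_L) let π_ε : |L| → |L| be the ε-squeezing map of L. Then π_ε is continuous, definable, and satisfies π_ε(τ) = τ for every simplex τ ∈ L. -/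
open Set Finset Metric

noncomputable section

open Paper

namespace SqAux
open Paper MvPolynomial

variable (S : OMinStructure)

lemma defSet_empty (k : ℕ) : (∅ : Set (Fin k → ℝ)) ∈ S.defSet k := by
  have h := S.algebraic_mem (k := k) 1
  have he : {x : Fin k → ℝ | MvPolynomial.eval x (1 : MvPolynomial (Fin k) ℝ) = 0} = ∅ := by
    ext x; simp
  rwa [he] at h

lemma defSet_univ (k : ℕ) : (univ : Set (Fin k → ℝ)) ∈ S.defSet k := by
  have := S.compl_mem (defSet_empty S k); simpa using this

lemma defSet_inter {k} {A B : Set (Fin k → ℝ)} (hA : A ∈ S.defSet k) (hB : B ∈ S.defSet k) :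
    A ∩ B ∈ S.defSet k := by
  have := S.compl_mem (S.union_mem (S.compl_mem hA) (S.compl_mem hB))
  rwa [Set.compl_union, compl_compl, compl_compl] at this

lemma defSet_biUnion {k} {ι : Type*} (s : Finset ι) (f : ι → Set (Fin k → ℝ))
    (h : ∀ i ∈ s, f i ∈ S.defSet k) : (⋃ i ∈ s, f i) ∈ S.defSet k := by
  classical
  induction s using Finset.induction_on with
  | empty => simpa using defSet_empty S k
  | insert _ _ hx ih =>
      rw [Finset.set_biUnion_insert]
      exact S.union_mem (h _ (Finset.mem_insert_self _ _))
        (ih fun i hi => h i (Finset.mem_insert_of_mem hi))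

lemma defSet_biInter {k} {ι : Type*} (s : Finset ι) (f : ι → Set (Fin k → ℝ))
    (h : ∀ i ∈ s, f i ∈ S.defSet k) : (⋂ i ∈ s, f i) ∈ S.defSet k := by
  classical
  induction s using Finset.induction_on with
  | empty => simpa using defSet_univ S k
  | insert _ _ hx ih =>
      rw [Finset.set_biInter_insert]
      exact defSet_inter S (h _ (Finset.mem_insert_self _ _))
        (ih fun i hi => h i (Finset.mem_insert_of_mem hi))

lemma natAdd_zero_eq_last (k : ℕ) : Fin.natAdd k (0 : Fin 1) = Fin.last k := by
  ext; simp

lemma defSet_pos_last (k : ℕ) :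
    {z : Fin (k+1) → ℝ | 0 < z (Fin.natAdd k 0)} ∈ S.defSet (k+1) := by
  have h1 : {x : Fin 1 → ℝ | x 0 ∈ ⋃ I ∈ ({Set.Ioi (0:ℝ)} : Finset (Set ℝ)), I} ∈ S.defSet 1 := by
    rw [S.one_dim]
    refine ⟨{Set.Ioi (0:ℝ)}, ?_, rfl⟩
    intro I hI
    rw [Finset.mem_singleton] at hI
    subst hI
    exact ordConnected_Ioi
  have h2 := S.prod_mem (defSet_univ S k) h1
  have he : {z : Fin (k + 1) → ℝ | (fun i => z (Fin.castAdd 1 i)) ∈ (univ : Set (Fin k → ℝ)) ∧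
      (fun j => z (Fin.natAdd k j)) ∈ {x : Fin 1 → ℝ | x 0 ∈ ⋃ I ∈ ({Set.Ioi (0:ℝ)} : Finset (Set ℝ)), I}}
      = {z : Fin (k+1) → ℝ | 0 < z (Fin.natAdd k 0)} := by
    ext z; simp
  rwa [he] at h2

lemma defSet_polyPos {k} (p : MvPolynomial (Fin k) ℝ) :
    {x : Fin k → ℝ | 0 < MvPolynomial.eval x p} ∈ S.defSet k := by
  set q : MvPolynomial (Fin (k+1)) ℝ := rename (Fin.castAdd 1) p - X (Fin.natAdd k 0) with hq
  have hA := defSet_inter S (S.algebraic_mem q) (defSet_pos_last S k)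
  have h := S.proj_mem hA
  have hev : ∀ (x : Fin k → ℝ) (t : ℝ), MvPolynomial.eval (Fin.snoc x t) q
      = MvPolynomial.eval x p - t := by
    intro x t
    rw [hq]
    rw [map_sub, eval_rename, eval_X]
    have hco : (Fin.snoc x t : Fin (k+1) → ℝ) ∘ Fin.castAdd 1 = x := by
      funext i
      simp only [Function.comp_apply]
      have h1 : Fin.castAdd 1 i = Fin.castSucc i := rfl
      rw [h1, Fin.snoc_castSucc]
    rw [hco, natAdd_zero_eq_last]
    simp
  have he : {x : Fin k → ℝ | ∃ t : ℝ, Fin.snoc x t ∈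
      ({z : Fin (k+1) → ℝ | MvPolynomial.eval z q = 0} ∩ {z | 0 < z (Fin.natAdd k 0)})}
      = {x : Fin k → ℝ | 0 < MvPolynomial.eval x p} := by
    ext x
    simp only [Set.mem_setOf_eq, Set.mem_inter_iff]
    constructor
    · rintro ⟨t, h1, h2⟩
      rw [hev] at h1
      have : t = MvPolynomial.eval x p := by linarith
      rw [natAdd_zero_eq_last, Fin.snoc_last] at h2
      rw [← this]; exact h2
    · intro hx
      refine ⟨MvPolynomial.eval x p, by rw [hev]; ring, ?_⟩
      rw [natAdd_zero_eq_last, Fin.snoc_last]; exact hx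
  rwa [he] at h

/-- A function given by a polynomial. -/
def IsPolyFn {k : ℕ} (φ : (Fin k → ℝ) → ℝ) : Prop :=
  ∃ p : MvPolynomial (Fin k) ℝ, ∀ z, φ z = MvPolynomial.eval z p

lemma isPolyFn_const {k} (c : ℝ) : IsPolyFn (k := k) (fun _ => c) := ⟨C c, by simp⟩

lemma isPolyFn_coord {k} (j : Fin k) : IsPolyFn (fun z => z j) := ⟨X j, by simp⟩

lemma IsPolyFn.add {k} {φ ψ : (Fin k → ℝ) → ℝ} (hφ : IsPolyFn φ) (hψ : IsPolyFn ψ) :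
    IsPolyFn (fun z => φ z + ψ z) := by
  obtain ⟨p, hp⟩ := hφ; obtain ⟨q, hq⟩ := hψ
  exact ⟨p + q, fun z => by simp [hp z, hq z]⟩

lemma IsPolyFn.sub {k} {φ ψ : (Fin k → ℝ) → ℝ} (hφ : IsPolyFn φ) (hψ : IsPolyFn ψ) :
    IsPolyFn (fun z => φ z - ψ z) := by
  obtain ⟨p, hp⟩ := hφ; obtain ⟨q, hq⟩ := hψ
  exact ⟨p - q, fun z => by simp [hp z, hq z]⟩

lemma IsPolyFn.mul {k} {φ ψ : (Fin k → ℝ) → ℝ} (hφ : IsPolyFn φ) (hψ : IsPolyFn ψ) :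
    IsPolyFn (fun z => φ z * ψ z) := by
  obtain ⟨p, hp⟩ := hφ; obtain ⟨q, hq⟩ := hψ
  exact ⟨p * q, fun z => by simp [hp z, hq z]⟩

lemma isPolyFn_sum {k} {ι : Type*} (s : Finset ι) (f : ι → (Fin k → ℝ) → ℝ)
    (h : ∀ i ∈ s, IsPolyFn (f i)) : IsPolyFn (fun z => ∑ i ∈ s, f i z) := by
  classical
  induction s using Finset.induction_on with
  | empty => simpa using isPolyFn_const (k := k) 0
  | insert a s hx ih =>
      have h1 : IsPolyFn (fun z => f a z + ∑ i ∈ s, f i z) :=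
        (h _ (Finset.mem_insert_self _ _)).add
          (ih fun i hi => h i (Finset.mem_insert_of_mem hi))
      have : (fun z => ∑ i ∈ insert a s, f i z) = fun z => f a z + ∑ i ∈ s, f i z := by
        funext z; rw [Finset.sum_insert hx]
      rwa [this]

lemma defSet_fn_eq {k} {φ ψ : (Fin k → ℝ) → ℝ} (hφ : IsPolyFn φ) (hψ : IsPolyFn ψ) :
    {z | φ z = ψ z} ∈ S.defSet k := by
  obtain ⟨p, hp⟩ := hφ; obtain ⟨q, hq⟩ := hψ
  have h := S.algebraic_mem (p - q)
  have he : {x : Fin k → ℝ | MvPolynomial.eval x (p - q) = 0} = {z | φ z = ψ z} := by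
    ext z
    simp only [Set.mem_setOf_eq, map_sub, hp z, hq z]
    constructor <;> intro h' <;> linarith
  rwa [he] at h

lemma defSet_fn_lt {k} {φ ψ : (Fin k → ℝ) → ℝ} (hφ : IsPolyFn φ) (hψ : IsPolyFn ψ) :
    {z | φ z < ψ z} ∈ S.defSet k := by
  obtain ⟨p, hp⟩ := hφ; obtain ⟨q, hq⟩ := hψ
  have h := defSet_polyPos S (q - p)
  have he : {x : Fin k → ℝ | 0 < MvPolynomial.eval x (q - p)} = {z | φ z < ψ z} := by
    ext z; simp [hp z, hq z, sub_pos]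
  rwa [he] at h

lemma defSet_fn_le {k} {φ ψ : (Fin k → ℝ) → ℝ} (hφ : IsPolyFn φ) (hψ : IsPolyFn ψ) :
    {z | φ z ≤ ψ z} ∈ S.defSet k := by
  have h := S.compl_mem (defSet_fn_lt S hψ hφ)
  have he : {z | ψ z < φ z}ᶜ = {z | φ z ≤ ψ z} := by
    ext z; simp
  rwa [he] at h

lemma exists_dualFam {V : Type*} [AddCommGroup V] [Module ℝ V] {ι : Type*} [DecidableEq ι]
    (u : ι → V) (hu : LinearIndependent ℝ u) :
    ∃ g : ι → V →ₗ[ℝ] ℝ, ∀ i j, g i (u j) = if i = j then 1 else 0 := by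
  classical
  have hs : LinearIndepOn ℝ id (Set.range u) := (linearIndepOn_id_range_iff hu.injective).mpr hu
  set B := Module.Basis.extend hs with hB
  have hmem : ∀ i, u i ∈ hs.extend (Set.subset_univ _) :=
    fun i => hs.subset_extend _ (Set.mem_range_self i)
  refine ⟨fun i => B.coord ⟨u i, hmem i⟩, ?_⟩
  intro i j
  have hBj : B ⟨u j, hmem j⟩ = u j := Module.Basis.extend_apply_self hs _
  rw [Module.Basis.coord_apply, ← hBj, B.repr_self, Finsupp.single_apply]
  by_cases h : i = j
  · subst h; simp
  · have hne : (⟨u j, hmem j⟩ : hs.extend (Set.subset_univ _)) ≠ ⟨u i, hmem i⟩ := by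
      intro hc
      have hval : u j = u i := congrArg Subtype.val hc
      exact h (hu.injective hval).symm
    simp [hne, h]

lemma exists_coords {m : ℕ} (τ : Finset (Euc m)) (hne : τ.Nonempty)
    (hind : AffineIndependent ℝ ((↑) : τ → Euc m)) :
    ∃ ℓ : Euc m → Euc m → ℝ,
      (∀ i, ∃ (f : Euc m →ₗ[ℝ] ℝ) (d : ℝ), ∀ x, ℓ i x = f x + d) ∧
      (∀ x, ∑ i ∈ τ, ℓ i x = 1) ∧
      (∀ (w : Euc m → ℝ) (x : Euc m), ∑ i ∈ τ, w i = 1 →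
        x = ∑ i ∈ τ, w i • i → ∀ i ∈ τ, ℓ i x = w i) := by
  classical
  obtain ⟨v0, hv0⟩ := hne
  set σ := τ.erase v0 with hσ
  -- linear independence of the family i - v0 over σ
  have hli : LinearIndependent ℝ (fun i : σ => (i : Euc m) - v0) := by
    have h := (affineIndependent_iff_linearIndependent_vsub ℝ ((↑) : τ → Euc m)
      ⟨v0, hv0⟩).1 hind
    set e : σ → {x : τ // x ≠ ⟨v0, hv0⟩} := fun i =>
      ⟨⟨(i : Euc m), Finset.mem_of_mem_erase i.2⟩, by
        intro hc
        have := congrArg (Subtype.val) hc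
        exact Finset.ne_of_mem_erase i.2 (by simpa using this)⟩ with he
    have hinj : Function.Injective e := by
      intro a b hab
      apply Subtype.ext
      have h1 : (e a).val = (e b).val := Subtype.ext_iff.1 hab
      have h2 : ((e a).val : Euc m) = ((e b).val : Euc m) := congrArg Subtype.val h1
      exact h2
    have h2 := h.comp e hinj
    have heq : ((fun i : {x : τ // x ≠ ⟨v0, hv0⟩} => ((i : τ) : Euc m) -ᵥ
        ((⟨v0, hv0⟩ : τ) : Euc m)) ∘ e) = fun i : σ => (i : Euc m) - v0 := by
      funext i
      simp [he]
    rwa [heq] at h2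
  obtain ⟨g, hg⟩ := exists_dualFam _ hli
  set ℓ : Euc m → Euc m → ℝ := fun i x =>
    if h : i ∈ σ then g ⟨i, h⟩ (x - v0)
    else if i = v0 then 1 - ∑ j ∈ σ.attach, g j (x - v0) else 0 with hℓ
  have hσsum : ∀ x, ∑ i ∈ σ, ℓ i x = ∑ j ∈ σ.attach, g j (x - v0) := by
    intro x
    rw [← Finset.sum_attach σ (fun i => ℓ i x)]
    apply Finset.sum_congr rfl
    intro j _
    simp only [hℓ, dif_pos j.2]
  have hv0σ : v0 ∉ σ := Finset.notMem_erase _ _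
  have hℓv0 : ∀ x, ℓ v0 x = 1 - ∑ j ∈ σ.attach, g j (x - v0) := by
    intro x; simp [hℓ, hv0σ]
  refine ⟨ℓ, ?_, ?_, ?_⟩
  · intro i
    by_cases h : i ∈ σ
    · refine ⟨g ⟨i, h⟩, -(g ⟨i, h⟩ v0), fun x => ?_⟩
      simp only [hℓ, dif_pos h, map_sub]
      ring
    · by_cases h2 : i = v0
      · refine ⟨-(∑ j ∈ σ.attach, g j), 1 + (∑ j ∈ σ.attach, g j) v0, fun x => ?_⟩
        rw [h2, hℓv0]
        simp only [LinearMap.neg_apply, LinearMap.coe_sum, Finset.sum_apply, map_sub]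
        rw [Finset.sum_sub_distrib]
        ring
      · exact ⟨0, 0, fun x => by simp [hℓ, h, h2]⟩
  · intro x
    rw [← Finset.add_sum_erase _ _ hv0, ← hσ, hσsum, hℓv0]
    ring
  · intro w x hw hx
    have key : x - v0 = ∑ i ∈ σ.attach, w i • ((i : Euc m) - v0) := by
      have h1 : x - v0 = ∑ i ∈ τ, w i • ((i : Euc m) - v0) := by
        calc x - v0 = (∑ i ∈ τ, w i • (i : Euc m)) - (∑ i ∈ τ, w i) • v0 := by
              rw [← hx, hw, one_smul]
          _ = ∑ i ∈ τ, (w i • (i : Euc m) - w i • v0) := by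
              rw [Finset.sum_smul, ← Finset.sum_sub_distrib]
          _ = ∑ i ∈ τ, w i • ((i : Euc m) - v0) := by simp [smul_sub]
      rw [h1, ← Finset.add_sum_erase _ _ hv0, ← hσ]
      simp only [sub_self, smul_zero, zero_add]
      exact (Finset.sum_attach σ (fun i => w i • (i - v0))).symm
    have hgval : ∀ j : {y // y ∈ σ}, g j (x - v0) = w j := by
      intro j
      rw [key, map_sum]
      simp only [map_smul, hg, smul_eq_mul, mul_ite, mul_one, mul_zero]
      simp [Finset.sum_ite_eq, Finset.mem_attach]
    intro i hi
    by_cases h : i ∈ σ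
    · have hv := hgval ⟨i, h⟩
      simp only [hℓ, dif_pos h]
      exact hv
    · have h2 : i = v0 := by
        by_contra hc
        exact h (Finset.mem_erase.2 ⟨hc, hi⟩)
      rw [h2, hℓv0]
      have hsum2 : ∑ j ∈ σ.attach, g j (x - v0) = ∑ j ∈ σ.attach, w j :=
        Finset.sum_congr rfl (fun j _ => hgval j)
      rw [hsum2, Finset.sum_attach σ w]
      have hws : w v0 + ∑ j ∈ σ, w j = 1 := by
        rw [hσ, Finset.add_sum_erase _ _ hv0]; exact hw
      linarith

lemma continuousOn_finset_biUnion {X Y : Type*} [TopologicalSpace X] [TopologicalSpace Y]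
    {ι : Type*} (s : Finset ι) (U : ι → Set X) (hU : ∀ i ∈ s, IsClosed (U i))
    {f : X → Y} (hf : ∀ i ∈ s, ContinuousOn f (U i)) : ContinuousOn f (⋃ i ∈ s, U i) := by
  intro x hx
  have hre : (⋃ i ∈ s, U i) = ⋃ i ∈ (↑s : Set ι), U i := by simp
  rw [ContinuousWithinAt, hre, nhdsWithin_biUnion s.finite_toSet U x]
  rw [Filter.tendsto_iSup]
  intro i
  rw [Filter.tendsto_iSup]
  intro hi
  by_cases hxi : x ∈ U i
  · exact hf i hi x hxi
  · have hbot : nhdsWithin x (U i) = ⊥ := by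
      by_contra hb
      have hne : (nhdsWithin x (U i)).NeBot := ⟨hb⟩
      have := mem_closure_iff_nhdsWithin_neBot.2 hne
      rw [(hU i hi).closure_eq] at this
      exact hxi this
    rw [hbot]
    exact Filter.tendsto_bot

/-! ### Simplex geometry via barycentric coordinates -/

lemma sum_combo {m : ℕ} (τ : Finset (Euc m)) (u w : Euc m → ℝ) (c : ℝ) :
    ∑ i ∈ τ, (u i + c * (w i - u i)) • i
      = (∑ i ∈ τ, u i • i) + c • ((∑ i ∈ τ, w i • i) - (∑ i ∈ τ, u i • i)) := by
  rw [smul_sub, Finset.smul_sum, Finset.smul_sum]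
  rw [← Finset.sum_sub_distrib, ← Finset.sum_add_distrib]
  apply Finset.sum_congr rfl
  intro i _
  rw [add_smul, mul_sub, sub_smul, smul_smul, smul_smul]

lemma mem_hull_of_coords {m : ℕ} (τ : Finset (Euc m)) (u : Euc m → ℝ)
    (h0 : ∀ i ∈ τ, 0 ≤ u i) (h1 : ∑ i ∈ τ, u i = 1) :
    (∑ i ∈ τ, u i • i) ∈ convexHull ℝ (↑τ : Set (Euc m)) := by
  have h := τ.centerMass_id_mem_convexHull h0 (by rw [h1]; norm_num)
  rwa [Finset.centerMass_eq_of_sum_1 _ _ h1, show (∑ i ∈ τ, u i • id i) = ∑ i ∈ τ, u i • i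
    from Finset.sum_congr rfl (fun i _ => by simp)] at h

section Geom

variable {m : ℕ} {τ : Finset (Euc m)} {ℓ : Euc m → Euc m → ℝ}

lemma coords_of_mem_hull
    (hcoord : ∀ (w : Euc m → ℝ) (x : Euc m), ∑ i ∈ τ, w i = 1 →
      x = ∑ i ∈ τ, w i • i → ∀ i ∈ τ, ℓ i x = w i)
    {x : Euc m} (hx : x ∈ convexHull ℝ (↑τ : Set (Euc m))) :
    (∀ i ∈ τ, 0 ≤ ℓ i x) ∧ x = ∑ i ∈ τ, ℓ i x • i := by
  rw [Finset.convexHull_eq] at hx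
  obtain ⟨w, h0, h1, hcm⟩ := hx
  rw [Finset.centerMass_eq_of_sum_1 _ _ h1] at hcm
  have hrep : x = ∑ i ∈ τ, w i • i := by
    rw [← hcm]; exact Finset.sum_congr rfl (fun i _ => by simp)
  have hval := hcoord w x h1 hrep
  refine ⟨fun i hi => by rw [hval i hi]; exact h0 i hi, ?_⟩
  conv_lhs => rw [hrep]
  exact Finset.sum_congr rfl (fun i hi => by rw [hval i hi])

lemma coord_bary (hne : τ.Nonempty)
    (hcoord : ∀ (w : Euc m → ℝ) (x : Euc m), ∑ i ∈ τ, w i = 1 →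
      x = ∑ i ∈ τ, w i • i → ∀ i ∈ τ, ℓ i x = w i) :
    ∀ i ∈ τ, ℓ i (bary τ) = (τ.card : ℝ)⁻¹ := by
  have hc : (τ.card : ℝ) ≠ 0 := by
    simp [Finset.card_ne_zero_of_mem hne.choose_spec]
  apply hcoord (fun _ => (τ.card : ℝ)⁻¹)
  · rw [Finset.sum_const, nsmul_eq_mul, mul_inv_cancel₀ hc]
  · rw [bary, Finset.smul_sum]

lemma coord_affine_combo
    (haff : ∀ i, ∃ (f : Euc m →ₗ[ℝ] ℝ) (d : ℝ), ∀ x, ℓ i x = f x + d)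
    (i : Euc m) (b x : Euc m) (c : ℝ) :
    ℓ i (b + c • (x - b)) = ℓ i b + c * (ℓ i x - ℓ i b) := by
  obtain ⟨f, d, hf⟩ := haff i
  simp only [hf, map_add, map_smul, map_sub, smul_eq_mul]
  ring

lemma mem_relBdry_iff
    (hsum1 : ∀ x, ∑ i ∈ τ, ℓ i x = 1)
    (hcoord : ∀ (w : Euc m → ℝ) (x : Euc m), ∑ i ∈ τ, w i = 1 →
      x = ∑ i ∈ τ, w i • i → ∀ i ∈ τ, ℓ i x = w i)
    {x : Euc m} (hx : x ∈ convexHull ℝ (↑τ : Set (Euc m))) :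
    x ∈ relBdry τ ↔ ∃ i ∈ τ, ℓ i x = 0 := by
  classical
  constructor
  · intro hb
    rw [relBdry] at hb
    rw [Set.mem_iUnion₂] at hb
    obtain ⟨t, ht, hxt⟩ := hb
    rw [Set.mem_setOf_eq] at ht
    rw [Finset.convexHull_eq] at hxt
    obtain ⟨w, h0, h1, hcm⟩ := hxt
    rw [Finset.centerMass_eq_of_sum_1 _ _ h1] at hcm
    set w' : Euc m → ℝ := fun i => if i ∈ t then w i else 0 with hw'
    have h1' : ∑ i ∈ τ, w' i = 1 := by
      rw [← Finset.sum_subset ht.subset (fun i _ hit => by simp [hw', hit])]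
      rw [← h1]
      exact Finset.sum_congr rfl (fun i hi => by simp [hw', hi])
    have hrep : x = ∑ i ∈ τ, w' i • i := by
      rw [← Finset.sum_subset ht.subset (fun i _ hit => by simp [hw', hit])]
      rw [← hcm]
      exact Finset.sum_congr rfl (fun i hi => by simp [hw', hi])
    have hval := hcoord w' x h1' hrep
    obtain ⟨i, hiτ, hit⟩ := Finset.exists_of_ssubset ht
    exact ⟨i, hiτ, by rw [hval i hiτ]; simp [hw', hit]⟩
  · rintro ⟨i, hiτ, hi0⟩
    obtain ⟨h0, hrep⟩ := coords_of_mem_hull hcoord hx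
    have hsumE : ∑ j ∈ τ.erase i, ℓ j x = 1 := by
      have h : ℓ i x + ∑ j ∈ τ.erase i, ℓ j x = ∑ j ∈ τ, ℓ j x :=
        Finset.add_sum_erase τ (fun j => ℓ j x) hiτ
      rw [hsum1 x, hi0, zero_add] at h
      exact h
    have hrepE : x = ∑ j ∈ τ.erase i, ℓ j x • j := by
      have h : ℓ i x • i + ∑ j ∈ τ.erase i, ℓ j x • j = ∑ j ∈ τ, ℓ j x • j :=
        Finset.add_sum_erase τ (fun j => ℓ j x • j) hiτ
      rw [hi0, zero_smul, zero_add] at h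
      conv_lhs => rw [hrep]
      exact h.symm
    have hmem := mem_hull_of_coords (τ.erase i) (fun j => ℓ j x)
      (fun j hj => h0 j (Finset.mem_of_mem_erase hj)) hsumE
    rw [← hrepE] at hmem
    rw [relBdry]
    exact Set.mem_biUnion (Finset.erase_ssubset hiτ) hmem

end Geom

/-! ### The squeezing map of one simplex -/

/-- The "gauge" of `x` relative to the simplex `τ` centred at its barycenter. -/
def sqG {m : ℕ} (τ : Finset (Euc m)) (hne : τ.Nonempty) (ℓ : Euc m → Euc m → ℝ)
    (x : Euc m) : ℝ :=
  1 - (τ.card : ℝ) * τ.inf' hne (fun i => ℓ i x)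

/-- The squeezing map of the simplex `τ` with ratio `r`. -/
def sqF {m : ℕ} (τ : Finset (Euc m)) (hne : τ.Nonempty) (ℓ : Euc m → Euc m → ℝ)
    (r : ℝ) (x : Euc m) : Euc m :=
  bary τ + (max r (sqG τ hne ℓ x))⁻¹ • (x - bary τ)

section SqCore

variable {m : ℕ} {τ : Finset (Euc m)} {ℓ : Euc m → Euc m → ℝ} {r : ℝ}
variable (hne : τ.Nonempty)
variable (hsum1 : ∀ x, ∑ i ∈ τ, ℓ i x = 1)
variable (hcoord : ∀ (w : Euc m → ℝ) (x : Euc m), ∑ i ∈ τ, w i = 1 →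
    x = ∑ i ∈ τ, w i • i → ∀ i ∈ τ, ℓ i x = w i)
variable (hr0 : 0 < r) (hr1 : r < 1)

set_option linter.unusedSectionVars false

include hne hsum1

lemma sqG_nonneg (x : Euc m) : 0 ≤ sqG τ hne ℓ x := by
  have hcard : 0 < τ.card := Finset.card_pos.2 hne
  have h := Finset.card_nsmul_le_sum τ (fun i => ℓ i x) (τ.inf' hne (fun i => ℓ i x))
    (fun i hi => Finset.inf'_le _ hi)
  rw [hsum1 x, nsmul_eq_mul] at h
  rw [sqG]
  linarith

include hcoord

lemma inf_eq (x : Euc m) :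
    τ.inf' hne (fun i => ℓ i x) = (1 - sqG τ hne ℓ x) / (τ.card : ℝ) := by
  have hc : (τ.card : ℝ) ≠ 0 := by
    have := Finset.card_pos.2 hne
    positivity
  rw [sqG]
  field_simp
  ring

lemma sqG_le_one {x : Euc m} (hx : x ∈ convexHull ℝ (↑τ : Set (Euc m))) :
    sqG τ hne ℓ x ≤ 1 := by
  obtain ⟨h0, _⟩ := coords_of_mem_hull hcoord hx
  have hinf : 0 ≤ τ.inf' hne (fun i => ℓ i x) := Finset.le_inf' _ _ h0
  have hcard : (0:ℝ) ≤ τ.card := Nat.cast_nonneg _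
  rw [sqG]
  nlinarith

/-- The coordinates of `sqF` at points of the simplex. -/
lemma sqF_repr {x : Euc m} (hx : x ∈ convexHull ℝ (↑τ : Set (Euc m))) :
    sqF τ hne ℓ r x = ∑ i ∈ τ, ((τ.card : ℝ)⁻¹ + (max r (sqG τ hne ℓ x))⁻¹ *
      (ℓ i x - (τ.card : ℝ)⁻¹)) • i := by
  obtain ⟨h0, hrep⟩ := coords_of_mem_hull hcoord hx
  have hb : bary τ = ∑ i ∈ τ, (τ.card : ℝ)⁻¹ • i := by rw [bary, Finset.smul_sum]
  rw [sum_combo τ (fun _ => (τ.card : ℝ)⁻¹) (fun i => ℓ i x)]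
  rw [sqF, ← hb, ← hrep]

lemma coord_lb (x : Euc m) {i : Euc m} (hi : i ∈ τ) :
    (1 - sqG τ hne ℓ x) / (τ.card : ℝ) ≤ ℓ i x := by
  rw [← inf_eq hne hsum1 hcoord x]
  exact Finset.inf'_le _ hi

lemma sqG_le_of_coord_lb {x : Euc m} {a : ℝ} (h : ∀ i ∈ τ, a ≤ ℓ i x) :
    sqG τ hne ℓ x ≤ 1 - (τ.card : ℝ) * a := by
  have hcard : (0:ℝ) ≤ τ.card := by positivity
  have hinf := Finset.le_inf' hne (fun i => ℓ i x) h
  rw [sqG]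
  nlinarith

lemma sum_coordw (x : Euc m) (c : ℝ) :
    ∑ i ∈ τ, ((τ.card : ℝ)⁻¹ + c * (ℓ i x - (τ.card : ℝ)⁻¹)) = 1 := by
  have hcpos := Finset.card_pos.2 hne
  have hc : (τ.card : ℝ) ≠ 0 := by positivity
  rw [Finset.sum_add_distrib, ← Finset.mul_sum, Finset.sum_sub_distrib, hsum1 x]
  simp only [Finset.sum_const, nsmul_eq_mul]
  field_simp
  ring

lemma sqF_mem {x : Euc m} (hr0 : 0 < r) (hx : x ∈ convexHull ℝ (↑τ : Set (Euc m))) :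
    sqF τ hne ℓ r x ∈ convexHull ℝ (↑τ : Set (Euc m)) := by
  have hcard0 : (0:ℝ) < τ.card := by exact_mod_cast Finset.card_pos.2 hne
  have hgnn := sqG_nonneg hne hsum1 x
  set g := sqG τ hne ℓ x with hg
  set c := (max r g)⁻¹ with hc
  have hmaxpos : 0 < max r g := lt_of_lt_of_le hr0 (le_max_left _ _)
  have hcpos : 0 < c := by rw [hc]; exact inv_pos.2 hmaxpos
  have hcg : c * g ≤ 1 := by
    rw [hc]
    calc (max r g)⁻¹ * g ≤ (max r g)⁻¹ * max r g :=
          mul_le_mul_of_nonneg_left (le_max_right _ _) (le_of_lt (inv_pos.2 hmaxpos))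
      _ = 1 := inv_mul_cancel₀ (ne_of_gt hmaxpos)
  rw [sqF_repr hne hsum1 hcoord hx]
  apply mem_hull_of_coords
  · intro i hi
    have hlb := coord_lb hne hsum1 hcoord x hi
    have key : c * ((1 - g) / (τ.card : ℝ)) ≤ c * ℓ i x :=
      mul_le_mul_of_nonneg_left hlb hcpos.le
    have hinv : (0:ℝ) < (τ.card : ℝ)⁻¹ := inv_pos.2 hcard0
    have hc1 : 0 ≤ 1 - c * g := by linarith
    have hdiv : (1 - g) / (τ.card : ℝ) = (1 - g) * (τ.card : ℝ)⁻¹ := div_eq_mul_inv _ _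
    rw [hdiv] at key
    nlinarith [mul_nonneg hc1 hinv.le]
  · exact sum_coordw hne hsum1 hcoord x _

/-- Points of the shrunken simplex: membership and coordinates. -/
lemma theta_coords {y : Euc m} (hr0 : 0 < r) (hr1 : r ≤ 1)
    (hy : y ∈ convexHull ℝ (↑τ : Set (Euc m))) :
    (bary τ + r • (y - bary τ)) ∈ convexHull ℝ (↑τ : Set (Euc m)) ∧
    (∀ i ∈ τ, ℓ i (bary τ + r • (y - bary τ))
      = (τ.card : ℝ)⁻¹ + r * (ℓ i y - (τ.card : ℝ)⁻¹)) ∧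
    sqG τ hne ℓ (bary τ + r • (y - bary τ)) ≤ r := by
  have hcard0 : (0:ℝ) < τ.card := by exact_mod_cast Finset.card_pos.2 hne
  have hinv : (0:ℝ) < (τ.card : ℝ)⁻¹ := inv_pos.2 hcard0
  obtain ⟨h0, hyrep⟩ := coords_of_mem_hull hcoord hy
  have hb : bary τ = ∑ i ∈ τ, (τ.card : ℝ)⁻¹ • i := by rw [bary, Finset.smul_sum]
  have hrep : bary τ + r • (y - bary τ)
      = ∑ i ∈ τ, ((τ.card : ℝ)⁻¹ + r * (ℓ i y - (τ.card : ℝ)⁻¹)) • i := by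
    rw [sum_combo τ (fun _ => (τ.card : ℝ)⁻¹) (fun i => ℓ i y), ← hb, ← hyrep]
  have hsumw := sum_coordw hne hsum1 hcoord y r
  have h0' : ∀ i ∈ τ, 0 ≤ (τ.card : ℝ)⁻¹ + r * (ℓ i y - (τ.card : ℝ)⁻¹) := by
    intro i hi
    have := h0 i hi
    nlinarith [h0 i hi]
  have hmem : (bary τ + r • (y - bary τ)) ∈ convexHull ℝ (↑τ : Set (Euc m)) := by
    rw [hrep]; exact mem_hull_of_coords τ _ h0' hsumw
  have hcoords := hcoord _ _ hsumw hrep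
  have hlb : ∀ i ∈ τ, (1 - r) * (τ.card : ℝ)⁻¹ ≤ ℓ i (bary τ + r • (y - bary τ)) := by
    intro i hi
    rw [hcoords i hi]
    nlinarith [h0 i hi]
  have hgle := sqG_le_of_coord_lb hne hsum1 hcoord hlb
  have hnn : (τ.card : ℝ) * ((1 - r) * (τ.card : ℝ)⁻¹) = 1 - r := by
    rw [mul_comm, mul_assoc, inv_mul_cancel₀ hcard0.ne', mul_one]
  rw [hnn] at hgle
  exact ⟨hmem, hcoords, by linarith⟩

lemma exists_theta_of_sqG_le {x : Euc m} (hr0 : 0 < r)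
    (hx : x ∈ convexHull ℝ (↑τ : Set (Euc m))) (hgle : sqG τ hne ℓ x ≤ r) :
    ∃ y ∈ convexHull ℝ (↑τ : Set (Euc m)), x = bary τ + r • (y - bary τ) := by
  have hcard0 : (0:ℝ) < τ.card := by exact_mod_cast Finset.card_pos.2 hne
  have hinv : (0:ℝ) < (τ.card : ℝ)⁻¹ := inv_pos.2 hcard0
  obtain ⟨h0, hxrep⟩ := coords_of_mem_hull hcoord hx
  have hb : bary τ = ∑ i ∈ τ, (τ.card : ℝ)⁻¹ • i := by rw [bary, Finset.smul_sum]
  refine ⟨bary τ + r⁻¹ • (x - bary τ), ?_, ?_⟩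
  · have hrep : bary τ + r⁻¹ • (x - bary τ)
        = ∑ i ∈ τ, ((τ.card : ℝ)⁻¹ + r⁻¹ * (ℓ i x - (τ.card : ℝ)⁻¹)) • i := by
      rw [sum_combo τ (fun _ => (τ.card : ℝ)⁻¹) (fun i => ℓ i x), ← hb, ← hxrep]
    rw [hrep]
    apply mem_hull_of_coords
    · intro i hi
      have hlb := coord_lb hne hsum1 hcoord x hi
      have hgnn := sqG_nonneg hne hsum1 x
      have hrinv : 0 < r⁻¹ := inv_pos.2 hr0
      have key : r⁻¹ * ((1 - sqG τ hne ℓ x) / (τ.card : ℝ) - (τ.card : ℝ)⁻¹)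
          ≤ r⁻¹ * (ℓ i x - (τ.card : ℝ)⁻¹) :=
        mul_le_mul_of_nonneg_left (by linarith) hrinv.le
      have hrg : r⁻¹ * sqG τ hne ℓ x ≤ 1 := by
        rw [inv_mul_eq_div]
        exact (div_le_one hr0).2 hgle
      have hfrac : (1 - sqG τ hne ℓ x) / (τ.card : ℝ)
          = (1 - sqG τ hne ℓ x) * (τ.card : ℝ)⁻¹ := div_eq_mul_inv _ _
      rw [hfrac] at key
      nlinarith [key, hrg, hinv.le]
    · exact sum_coordw hne hsum1 hcoord x _
  · have h1 : bary τ + r⁻¹ • (x - bary τ) - bary τ = r⁻¹ • (x - bary τ) := by abel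
    rw [h1, smul_smul, mul_inv_cancel₀ (ne_of_gt hr0), one_smul]
    abel

lemma sqF_theta {x : Euc m} (hgle : sqG τ hne ℓ x ≤ r) :
    sqF τ hne ℓ r x = bary τ + r⁻¹ • (x - bary τ) := by
  rw [sqF, max_eq_left hgle]

lemma sqF_bdry_fix {x : Euc m} (hr1 : r ≤ 1)
    (hx : x ∈ convexHull ℝ (↑τ : Set (Euc m))) (hex : ∃ i ∈ τ, ℓ i x = 0) :
    sqF τ hne ℓ r x = x := by
  obtain ⟨i, hi, h0i⟩ := hex
  obtain ⟨h0, _⟩ := coords_of_mem_hull hcoord hx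
  have hinfle : τ.inf' hne (fun j => ℓ j x) ≤ 0 := by
    have := Finset.inf'_le (fun j => ℓ j x) hi
    rw [h0i] at this
    exact this
  have hinfge : 0 ≤ τ.inf' hne (fun j => ℓ j x) := Finset.le_inf' _ _ h0
  have hg : sqG τ hne ℓ x = 1 := by
    rw [sqG, le_antisymm hinfle hinfge]
    ring
  rw [sqF, hg, max_eq_right hr1, inv_one, one_smul]
  abel

lemma sqG_eq_one_of_bdry {x : Euc m} (hx : x ∈ convexHull ℝ (↑τ : Set (Euc m)))
    (hbd : x ∈ relBdry τ) : sqG τ hne ℓ x = 1 := by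
  obtain ⟨i, hi, h0i⟩ := (mem_relBdry_iff hsum1 hcoord hx).1 hbd
  obtain ⟨h0, _⟩ := coords_of_mem_hull hcoord hx
  have hinfle : τ.inf' hne (fun j => ℓ j x) ≤ 0 := by
    have := Finset.inf'_le (fun j => ℓ j x) hi
    rw [h0i] at this
    exact this
  have hinfge : 0 ≤ τ.inf' hne (fun j => ℓ j x) := Finset.le_inf' _ _ h0
  rw [sqG, le_antisymm hinfle hinfge]
  ring

lemma sqF_relBdry {x : Euc m} (hr0 : 0 < r) (hgt : r < sqG τ hne ℓ x)
    (hx : x ∈ convexHull ℝ (↑τ : Set (Euc m))) : sqF τ hne ℓ r x ∈ relBdry τ := by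
  have hg0 : 0 < sqG τ hne ℓ x := lt_trans hr0 hgt
  have hmax : max r (sqG τ hne ℓ x) = sqG τ hne ℓ x := max_eq_right hgt.le
  have hsumw := sum_coordw hne hsum1 hcoord x (sqG τ hne ℓ x)⁻¹
  have hrep := sqF_repr hne hsum1 hcoord (r := r) hx
  rw [hmax] at hrep
  have hcoords := hcoord _ _ hsumw hrep
  obtain ⟨i0, hi0, hmin⟩ := Finset.exists_mem_eq_inf' hne (fun i => ℓ i x)
  rw [mem_relBdry_iff hsum1 hcoord (sqF_mem hne hsum1 hcoord hr0 hx)]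
  refine ⟨i0, hi0, ?_⟩
  rw [hcoords i0 hi0]
  have hval : ℓ i0 x = (1 - sqG τ hne ℓ x) / (τ.card : ℝ) := by
    rw [← hmin, inf_eq hne hsum1 hcoord]
  rw [hval]
  have hcard0 : (τ.card : ℝ) ≠ 0 := by
    have := Finset.card_pos.2 hne; positivity
  field_simp
  ring

lemma sqF_cont (haff : ∀ i, ∃ (f : Euc m →ₗ[ℝ] ℝ) (d : ℝ), ∀ x, ℓ i x = f x + d)
    (hr0 : 0 < r) : Continuous (sqF τ hne ℓ r) := by
  have hl : ∀ i : Euc m, Continuous (fun x => ℓ i x) := by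
    intro i
    obtain ⟨f, d, hf⟩ := haff i
    have : (fun x => ℓ i x) = fun x => f x + d := by funext x; exact hf x
    rw [this]
    exact (LinearMap.continuous_of_finiteDimensional f).add continuous_const
  have hg : Continuous (sqG τ hne ℓ) := by
    have : sqG τ hne ℓ = fun x => 1 - (τ.card : ℝ) * τ.inf' hne (fun i => ℓ i x) := rfl
    rw [this]
    exact continuous_const.sub (continuous_const.mul
      (Continuous.finset_inf'_apply hne (fun i _ => hl i)))
  have hmax : Continuous (fun x => (max r (sqG τ hne ℓ x))⁻¹) :=
    (continuous_const.max hg).inv₀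
      (fun x => ne_of_gt (lt_of_lt_of_le hr0 (le_max_left _ _)))
  exact continuous_const.add (hmax.smul (continuous_id.sub continuous_const))

omit hne hsum1 hcoord in
lemma euc_sum_apply {m' : ℕ} (τ' : Finset (Euc m')) (c : Euc m' → ℝ) (k : Fin m') :
    (∑ i ∈ τ', c i • i) k = ∑ i ∈ τ', c i * i k := by
  rw [WithLp.ofLp_sum, Finset.sum_apply]
  exact Finset.sum_congr rfl (fun i _ => by rw [PiLp.smul_apply, smul_eq_mul])

/-- Coordinates of points of the hull of a subface. -/
lemma mem_hull_sub_iff {σ : Finset (Euc m)} (hστ : σ ⊆ τ) (x : Euc m) :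
    x ∈ convexHull ℝ (↑σ : Set (Euc m)) ↔
      ((∀ k, x k = ∑ i ∈ τ, ℓ i x * i k) ∧ (∀ i ∈ τ, 0 ≤ ℓ i x) ∧
        (∀ i ∈ τ, i ∉ σ → ℓ i x = 0)) := by
  classical
  constructor
  · intro hx
    rw [Finset.convexHull_eq] at hx
    obtain ⟨w, h0, h1, hcm⟩ := hx
    rw [Finset.centerMass_eq_of_sum_1 _ _ h1] at hcm
    set w' : Euc m → ℝ := fun i => if i ∈ σ then w i else 0 with hw'
    have h1' : ∑ i ∈ τ, w' i = 1 := by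
      rw [← Finset.sum_subset hστ (fun i _ hit => by simp [hw', hit]), ← h1]
      exact Finset.sum_congr rfl (fun i hi => by simp [hw', hi])
    have hrep : x = ∑ i ∈ τ, w' i • i := by
      rw [← Finset.sum_subset hστ (fun i _ hit => by simp [hw', hit]), ← hcm]
      exact Finset.sum_congr rfl (fun i hi => by simp [hw', hi])
    have hval := hcoord w' x h1' hrep
    refine ⟨?_, ?_, ?_⟩
    · intro k
      conv_lhs => rw [hrep]
      rw [euc_sum_apply]
      exact Finset.sum_congr rfl (fun i hi => by rw [hval i hi])
    · intro i hi
      rw [hval i hi]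
      by_cases h : i ∈ σ
      · simp only [hw', if_pos h]; exact h0 i h
      · simp [hw', h]
    · intro i hi hnot
      rw [hval i hi]
      simp [hw', hnot]
  · rintro ⟨heq, h0, hvan⟩
    have hrep : x = ∑ i ∈ τ, ℓ i x • i := PiLp.ext fun k => by
      rw [euc_sum_apply]; exact heq k
    have hsumσ : ∑ i ∈ σ, ℓ i x = 1 := by
      rw [Finset.sum_subset hστ (fun i hi hnot => hvan i hi hnot), hsum1]
    have hrepσ : x = ∑ i ∈ σ, ℓ i x • i := by
      rw [Finset.sum_subset hστ (fun i hi hnot => by rw [hvan i hi hnot, zero_smul])]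
      exact hrep
    rw [hrepσ]
    exact mem_hull_of_coords σ _ (fun i hi => h0 i (hστ hi)) hsumσ

omit hne hsum1 hcoord in
lemma coord_eval_combo (x : Euc m) (c : ℝ) (k : Fin m) :
    (bary τ + c • (x - bary τ)) k = bary τ k + c * (x k - bary τ k) := by
  rw [PiLp.add_apply, PiLp.smul_apply, PiLp.sub_apply, smul_eq_mul]

/-- First-order description of the graph of `sqF` over the simplex. -/
lemma sqF_form_iff {x y : Euc m} (hr0 : 0 < r)
    (hx : x ∈ convexHull ℝ (↑τ : Set (Euc m))) :
    y = sqF τ hne ℓ r x ↔ ∃ i ∈ τ, (∀ j ∈ τ, ℓ i x ≤ ℓ j x) ∧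
      (((1 - (τ.card : ℝ) * ℓ i x) ≤ r ∧
          ∀ k, r * (y k - bary τ k) = x k - bary τ k) ∨
        (r ≤ 1 - (τ.card : ℝ) * ℓ i x ∧
          ∀ k, (1 - (τ.card : ℝ) * ℓ i x) * (y k - bary τ k) = x k - bary τ k)) := by
  have hgdef : ∀ i ∈ τ, (∀ j ∈ τ, ℓ i x ≤ ℓ j x) →
      1 - (τ.card : ℝ) * ℓ i x = sqG τ hne ℓ x := by
    intro i hi hmin
    have h1 : τ.inf' hne (fun j => ℓ j x) = ℓ i x :=
      le_antisymm (Finset.inf'_le _ hi) (Finset.le_inf' _ _ hmin)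
    rw [sqG, h1]
  constructor
  · intro hy
    obtain ⟨i0, hi0, hmin0⟩ := Finset.exists_mem_eq_inf' hne (fun i => ℓ i x)
    have hmin : ∀ j ∈ τ, ℓ i0 x ≤ ℓ j x := by
      intro j hj
      rw [← hmin0]
      exact Finset.inf'_le _ hj
    refine ⟨i0, hi0, hmin, ?_⟩
    have hgg := hgdef i0 hi0 hmin
    by_cases hle : sqG τ hne ℓ x ≤ r
    · left
      refine ⟨by rw [hgg]; exact hle, ?_⟩
      intro k
      rw [hy, sqF_theta hne hsum1 hcoord hle, coord_eval_combo]
      field_simp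
      ring
    · right
      push_neg at hle
      have hg0 : 0 < sqG τ hne ℓ x := lt_trans hr0 hle
      refine ⟨by rw [hgg]; exact hle.le, ?_⟩
      intro k
      rw [hgg, hy, sqF, max_eq_right hle.le, coord_eval_combo]
      field_simp
      ring
  · rintro ⟨i, hi, hmin, hbr⟩
    have hgg := hgdef i hi hmin
    rcases hbr with ⟨hle, heqs⟩ | ⟨hge, heqs⟩
    · rw [hgg] at hle
      have hy : y = bary τ + r⁻¹ • (x - bary τ) := by
        ext k
        rw [coord_eval_combo]
        have := heqs k
        field_simp at this ⊢
        linarith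
      rw [hy, sqF_theta hne hsum1 hcoord hle]
    · rw [hgg] at hge
      have hg0 : 0 < sqG τ hne ℓ x := lt_of_lt_of_le hr0 hge
      have hy : y = bary τ + (sqG τ hne ℓ x)⁻¹ • (x - bary τ) := by
        ext k
        rw [coord_eval_combo]
        have h2 := heqs k
        rw [hgg] at h2
        field_simp at h2 ⊢
        linarith
      rw [hy, sqF, max_eq_right hge]

end SqCore

/-! ### Definability helpers -/

def xpart {m : ℕ} (z : Fin (m + m) → ℝ) : Euc m :=
  (WithLp.equiv 2 (Fin m → ℝ)).symm (fun i => z (Fin.castAdd m i))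

def ypart {m : ℕ} (z : Fin (m + m) → ℝ) : Euc m :=
  (WithLp.equiv 2 (Fin m → ℝ)).symm (fun j => z (Fin.natAdd m j))

lemma xpart_apply {m : ℕ} (z : Fin (m + m) → ℝ) (i : Fin m) :
    xpart z i = z (Fin.castAdd m i) := rfl

lemma ypart_apply {m : ℕ} (z : Fin (m + m) → ℝ) (j : Fin m) :
    ypart z j = z (Fin.natAdd m j) := rfl

lemma lin_expand {m : ℕ} (f : Euc m →ₗ[ℝ] ℝ) (x : Euc m) :
    f x = ∑ i ∈ Finset.univ, x i * f (EuclideanSpace.single i (1:ℝ)) := by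
  have hx : x = ∑ i ∈ Finset.univ, x i • EuclideanSpace.single i (1:ℝ) := by
    ext k
    rw [WithLp.ofLp_sum, Finset.sum_apply]
    simp [EuclideanSpace.single_apply]
  conv_lhs => rw [hx]
  rw [map_sum]
  exact Finset.sum_congr rfl (fun i _ => by rw [map_smul, smul_eq_mul])

lemma isPolyFn_lin_xpart {m : ℕ} (f : Euc m →ₗ[ℝ] ℝ) (d : ℝ) :
    IsPolyFn (fun z : Fin (m + m) → ℝ => f (xpart z) + d) := by
  have he : (fun z : Fin (m + m) → ℝ => f (xpart z) + d)
      = fun z => (∑ i ∈ Finset.univ,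
          z (Fin.castAdd m i) * f (EuclideanSpace.single i (1:ℝ))) + d := by
    funext z
    rw [lin_expand f (xpart z)]
    rfl
  rw [he]
  exact (isPolyFn_sum _ _ (fun i _ => (isPolyFn_coord _).mul (isPolyFn_const _))).add
    (isPolyFn_const d)

end SqAux


/-- for `0 < ε < δ_L`, the `ε`-squeezing map of `L` exists, is continuous,
definable, and maps each simplex of `L` onto itself. -/
theorem stmt_15 {m : ℕ} (S : OMinStructure) (L : SimpComplex (Euc m)) (ε : ℝ) (hε : 0 < ε)
    (hεδ : ∀ τ : Finset (Euc m), IsMaximalFace (↑L.faces : Set (Finset (Euc m))) τ →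
      2 ≤ τ.card → ε < simpDelta τ) :
    ∃ π : Euc m → Euc m,
      IsSqueezingMap (↑L.faces : Set (Finset (Euc m))) ε π ∧
      ContinuousOn π (polyh (↑L.faces : Set (Finset (Euc m)))) ∧
      DefMapOn S π (polyh (↑L.faces : Set (Finset (Euc m)))) ∧
      ∀ τ ∈ L.faces,
        π '' convexHull ℝ (↑τ : Set (Euc m)) = convexHull ℝ (↑τ : Set (Euc m)) := by
  classical
  -- barycentric coordinates for every face
  have hco : ∀ τ : Finset (Euc m), τ ∈ L.faces → ∃ ℓ : Euc m → Euc m → ℝ,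
      (∀ i, ∃ (f : Euc m →ₗ[ℝ] ℝ) (d : ℝ), ∀ x, ℓ i x = f x + d) ∧
      (∀ x, ∑ i ∈ τ, ℓ i x = 1) ∧
      (∀ (w : Euc m → ℝ) (x : Euc m), ∑ i ∈ τ, w i = 1 →
        x = ∑ i ∈ τ, w i • i → ∀ i ∈ τ, ℓ i x = w i) :=
    fun τ hτ => SqAux.exists_coords τ (L.nonempty_mem τ hτ) (L.indep τ hτ)
  choose! lf haff hsum1 hcoord using hco
  -- a maximal face above every face
  have hmaxex : ∀ σ ∈ L.faces, ∃ τ, (τ ∈ L.faces ∧ σ ⊆ τ) ∧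
      IsMaximalFace (↑L.faces : Set (Finset (Euc m))) τ := by
    intro σ hσ
    obtain ⟨τ, hτmem, hτmax⟩ := (L.faces.filter (fun t => σ ⊆ t)).exists_max_image
      Finset.card ⟨σ, Finset.mem_filter.2 ⟨hσ, Finset.Subset.refl σ⟩⟩
    rw [Finset.mem_filter] at hτmem
    refine ⟨τ, ⟨hτmem.1, hτmem.2⟩, Finset.mem_coe.2 hτmem.1, ?_⟩
    intro t ht hsub
    have htf : t ∈ L.faces.filter (fun t => σ ⊆ t) :=
      Finset.mem_filter.2 ⟨Finset.mem_coe.1 ht, hτmem.2.trans hsub⟩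
    exact (Finset.eq_of_subset_of_card_le hsub (hτmax t htf)).symm
  choose! mx hmxfs hmxmem hmxmax using hmaxex
  have hmxf : ∀ σ ∈ L.faces, mx σ ∈ L.faces := fun σ hσ => (hmxfs σ hσ).1
  have hmxsub : ∀ σ ∈ L.faces, σ ⊆ mx σ := fun σ hσ => (hmxfs σ hσ).2
  have hmxmax' : ∀ σ ∈ L.faces,
      IsMaximalFace (↑L.faces : Set (Finset (Euc m))) (mx σ) :=
    fun σ hσ => ⟨hmxmem σ hσ, hmxmax σ hσ⟩
  -- basic facts
  have hMfaces : ∀ τ : Finset (Euc m),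
      IsMaximalFace (↑L.faces : Set (Finset (Euc m))) τ → τ ∈ L.faces :=
    fun τ h => Finset.mem_coe.1 h.1
  have hrfacts : ∀ τ : Finset (Euc m),
      IsMaximalFace (↑L.faces : Set (Finset (Euc m))) τ → 2 ≤ τ.card →
      0 < ε / simpDelta τ ∧ ε / simpDelta τ < 1 := by
    intro τ hM h2
    have hδ := hεδ τ hM h2
    have hδ0 : 0 < simpDelta τ := lt_trans hε hδ
    exact ⟨div_pos hε hδ0, (div_lt_one hδ0).2 hδ⟩
  -- intersection of two distinct maximal faces lies in the boundary
  have hinterBdry : ∀ τ τ' : Finset (Euc m),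
      IsMaximalFace (↑L.faces : Set (Finset (Euc m))) τ →
      IsMaximalFace (↑L.faces : Set (Finset (Euc m))) τ' → τ ≠ τ' →
      ∀ x, x ∈ convexHull ℝ (↑τ : Set (Euc m)) →
        x ∈ convexHull ℝ (↑τ' : Set (Euc m)) → x ∈ relBdry τ := by
    intro τ τ' hM hM' hneq x hx hx'
    have hsub := L.inter_subset τ (hMfaces τ hM) τ' (hMfaces τ' hM') ⟨hx, hx'⟩
    rw [← Finset.coe_inter] at hsub
    have hss : τ ∩ τ' ⊂ τ := by
      refine ssubset_of_subset_of_ne Finset.inter_subset_left ?_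
      intro hEq
      have hsub2 : τ ⊆ τ' := by rw [← Finset.inter_eq_left]; exact hEq
      exact hneq (hM.2 τ' hM'.1 hsub2).symm
    exact Set.mem_biUnion hss hsub
  -- the squeezing map
  set F : Finset (Euc m) → Euc m → Euc m := fun τ x =>
    if h : τ.Nonempty then SqAux.sqF τ h (lf τ) (ε / simpDelta τ) x else x with hF
  set π : Euc m → Euc m := fun x =>
    if h : ∃ τ : Finset (Euc m),
        (IsMaximalFace (↑L.faces : Set (Finset (Euc m))) τ ∧ 2 ≤ τ.card) ∧
        x ∈ convexHull ℝ (↑τ : Set (Euc m)) then F h.choose x else x with hπ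
  -- F fixes boundary points of maximal faces
  have hFfix : ∀ τ : Finset (Euc m),
      IsMaximalFace (↑L.faces : Set (Finset (Euc m))) τ → 2 ≤ τ.card →
      ∀ x ∈ convexHull ℝ (↑τ : Set (Euc m)), x ∈ relBdry τ → F τ x = x := by
    intro τ hM h2 x hx hbd
    have hτf := hMfaces τ hM
    have hne' : τ.Nonempty := L.nonempty_mem τ hτf
    obtain ⟨hr0, hr1⟩ := hrfacts τ hM h2
    have hex := (SqAux.mem_relBdry_iff (hsum1 τ hτf) (hcoord τ hτf) hx).1 hbd
    simp only [hF]
    rw [dif_pos hne']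
    exact SqAux.sqF_bdry_fix hne' (hsum1 τ hτf) (hcoord τ hτf) hr1.le hx hex
  -- evaluation of π on hulls of maximal faces
  have hπF : ∀ τ : Finset (Euc m),
      IsMaximalFace (↑L.faces : Set (Finset (Euc m))) τ → 2 ≤ τ.card →
      ∀ x ∈ convexHull ℝ (↑τ : Set (Euc m)), π x = F τ x := by
    intro τ hM h2 x hx
    have hPx : ∃ τ0 : Finset (Euc m),
        (IsMaximalFace (↑L.faces : Set (Finset (Euc m))) τ0 ∧ 2 ≤ τ0.card) ∧
        x ∈ convexHull ℝ (↑τ0 : Set (Euc m)) := ⟨τ, ⟨hM, h2⟩, hx⟩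
    have hev : π x = F hPx.choose x := by
      simp only [hπ]
      rw [dif_pos hPx]
    rw [hev]
    obtain ⟨⟨hM', h2'⟩, hx'⟩ := hPx.choose_spec
    by_cases heq : hPx.choose = τ
    · rw [heq]
    · rw [hFfix _ hM' h2' x hx' (hinterBdry _ _ hM' hM heq x hx' hx),
        hFfix τ hM h2 x hx (hinterBdry τ _ hM hM' (fun h => heq h.symm) x hx hx')]
  -- π is the identity away from the open maximal simplices
  have hπid : ∀ x : Euc m,
      (∀ τ : Finset (Euc m), IsMaximalFace (↑L.faces : Set (Finset (Euc m))) τ →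
        2 ≤ τ.card → x ∉ relInt τ) → π x = x := by
    intro x hx
    by_cases hPx : ∃ τ0 : Finset (Euc m),
        (IsMaximalFace (↑L.faces : Set (Finset (Euc m))) τ0 ∧ 2 ≤ τ0.card) ∧
        x ∈ convexHull ℝ (↑τ0 : Set (Euc m))
    · have hev : π x = F hPx.choose x := by
        simp only [hπ]
        rw [dif_pos hPx]
      obtain ⟨⟨hM', h2'⟩, hx'⟩ := hPx.choose_spec
      have hbd : x ∈ relBdry hPx.choose := by
        by_contra hc
        exact hx _ hM' h2' ⟨hx', hc⟩
      rw [hev]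
      exact hFfix _ hM' h2' x hx' hbd
    · simp only [hπ]
      rw [dif_neg hPx]
  -- the image lemma, used twice
  have himage : ∀ σ ∈ L.faces,
      π '' convexHull ℝ (↑σ : Set (Euc m)) = convexHull ℝ (↑σ : Set (Euc m)) := by
    intro σ hσ
    have hτf := hmxf σ hσ
    have hsubστ := hmxsub σ hσ
    have hMτ := hmxmax' σ hσ
    by_cases h2 : 2 ≤ (mx σ).card
    · have hne' : (mx σ).Nonempty := L.nonempty_mem _ hτf
      obtain ⟨hr0, hr1⟩ := hrfacts _ hMτ h2
      by_cases heq : σ = mx σ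
      · rw [heq]
        apply Set.Subset.antisymm
        · rintro y ⟨x, hx, rfl⟩
          rw [hπF _ hMτ h2 x hx]
          simp only [hF]
          rw [dif_pos hne']
          exact SqAux.sqF_mem hne' (hsum1 _ hτf) (hcoord _ hτf) hr0 hx
        · intro y hy
          have hth := SqAux.theta_coords hne' (hsum1 _ hτf) (hcoord _ hτf) hr0 hr1.le hy
          refine ⟨bary (mx σ) + (ε / simpDelta (mx σ)) • (y - bary (mx σ)), hth.1, ?_⟩
          rw [hπF _ hMτ h2 _ hth.1]
          simp only [hF]
          rw [dif_pos hne', SqAux.sqF_theta hne' (hsum1 _ hτf) (hcoord _ hτf) hth.2.2,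
            add_sub_cancel_left, smul_smul, inv_mul_cancel₀ (ne_of_gt hr0), one_smul]
          abel
      · have hid : ∀ x ∈ convexHull ℝ (↑σ : Set (Euc m)), π x = x := by
          intro x hx
          have hxτ : x ∈ convexHull ℝ (↑(mx σ) : Set (Euc m)) :=
            convexHull_mono (Finset.coe_subset.2 hsubστ) hx
          have hbd : x ∈ relBdry (mx σ) :=
            Set.mem_biUnion (ssubset_of_subset_of_ne hsubστ heq) hx
          rw [hπF _ hMτ h2 x hxτ]
          exact hFfix _ hMτ h2 x hxτ hbd
        calc π '' convexHull ℝ (↑σ : Set (Euc m))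
            = id '' convexHull ℝ (↑σ : Set (Euc m)) := Set.image_congr hid
          _ = convexHull ℝ (↑σ : Set (Euc m)) := Set.image_id _
    · -- the maximal face is a single vertex
      have hσne : σ.Nonempty := L.nonempty_mem σ hσ
      have hcard1 : σ.card = 1 := by
        have h1 : 1 ≤ σ.card := Finset.card_pos.2 hσne
        have h2' : σ.card ≤ (mx σ).card := Finset.card_le_card hsubστ
        omega
      obtain ⟨v, hv⟩ := Finset.card_eq_one.1 hcard1
      have hσmax : IsMaximalFace (↑L.faces : Set (Finset (Euc m))) σ := by
        have : σ = mx σ :=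
          Finset.eq_of_subset_of_card_le hsubστ (by omega)
        rw [this]; exact hMτ
      have hPneg : ¬ ∃ τ0 : Finset (Euc m),
          (IsMaximalFace (↑L.faces : Set (Finset (Euc m))) τ0 ∧ 2 ≤ τ0.card) ∧
          v ∈ convexHull ℝ (↑τ0 : Set (Euc m)) := by
        rintro ⟨τ0, ⟨hM0, h20⟩, hv0⟩
        have hvσ : v ∈ convexHull ℝ (↑σ : Set (Euc m)) :=
          subset_convexHull ℝ _ (by rw [hv]; simp)
        have hneq : σ ≠ τ0 := by
          intro hEq
          rw [← hEq] at h20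
          omega
        have hbd := hinterBdry σ τ0 hσmax hM0 hneq v hvσ hv0
        rw [relBdry] at hbd
        obtain ⟨t, ht, hvt⟩ := Set.mem_iUnion₂.1 hbd
        rw [Set.mem_setOf_eq, hv] at ht
        have : t = ∅ := by
          rw [Finset.ssubset_singleton_iff] at ht
          exact ht
        rw [this] at hvt
        simp at hvt
      have hπv : π v = v := by
        simp only [hπ]
        rw [dif_neg hPneg]
      rw [hv, Finset.coe_singleton, convexHull_singleton, Set.image_singleton, hπv]
  refine ⟨π, ⟨?_, ?_⟩, ?_, ?_, himage⟩
  · -- identity clause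
    intro x _ hx
    exact hπid x hx
  · -- simplex squeeze clause
    intro τ hM h2
    have hτf := hMfaces τ hM
    have hne' : τ.Nonempty := L.nonempty_mem τ hτf
    obtain ⟨hr0, hr1⟩ := hrfacts τ hM h2
    have hδ0 : 0 < simpDelta τ := lt_trans hε (hεδ τ hM h2)
    intro x hx
    constructor
    · rintro ⟨y, hy, hxy⟩
      have hth := SqAux.theta_coords hne' (hsum1 τ hτf) (hcoord τ hτf) hr0 hr1.le hy
      rw [← hxy] at hth
      rw [hπF τ hM h2 x hx]
      simp only [hF]
      rw [dif_pos hne', SqAux.sqF_theta hne' (hsum1 τ hτf) (hcoord τ hτf) hth.2.2, inv_div]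
    · intro hnex
      have hgt : ε / simpDelta τ < SqAux.sqG τ hne' (lf τ) x := by
        by_contra hc
        push_neg at hc
        exact hnex (SqAux.exists_theta_of_sqG_le hne' (hsum1 τ hτf) (hcoord τ hτf) hr0 hx hc)
      constructor
      · rw [hπF τ hM h2 x hx]
        simp only [hF]
        rw [dif_pos hne']
        exact SqAux.sqF_relBdry hne' (hsum1 τ hτf) (hcoord τ hτf) hr0 hgt hx
      · refine ⟨(max (ε / simpDelta τ) (SqAux.sqG τ hne' (lf τ) x))⁻¹,
          le_of_lt (inv_pos.2 (lt_of_lt_of_le hr0 (le_max_left _ _))), ?_⟩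
        rw [hπF τ hM h2 x hx]
        simp only [hF]
        rw [dif_pos hne']
        rfl
  · -- continuity
    have hpoly : polyh (↑L.faces : Set (Finset (Euc m)))
        = ⋃ σ ∈ L.faces, convexHull ℝ (↑σ : Set (Euc m)) := by
      rw [polyh]
      ext x
      simp
    rw [hpoly]
    apply SqAux.continuousOn_finset_biUnion
    · intro σ _
      exact (σ.finite_toSet.isCompact_convexHull ℝ).isClosed
    · intro σ hσ
      have hτf := hmxf σ hσ
      have hsubστ := hmxsub σ hσ
      have hMτ := hmxmax' σ hσ
      by_cases h2 : 2 ≤ (mx σ).card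
      · have hne' : (mx σ).Nonempty := L.nonempty_mem _ hτf
        obtain ⟨hr0, _⟩ := hrfacts _ hMτ h2
        have hFeq : F (mx σ) = SqAux.sqF (mx σ) hne' (lf (mx σ)) (ε / simpDelta (mx σ)) := by
          funext x
          simp only [hF]
          rw [dif_pos hne']
        have hcont : Continuous (F (mx σ)) := by
          rw [hFeq]
          exact SqAux.sqF_cont hne' (hsum1 _ hτf) (hcoord _ hτf) (haff _ hτf) hr0
        apply hcont.continuousOn.congr
        intro x hx
        exact hπF _ hMτ h2 x (convexHull_mono (Finset.coe_subset.2 hsubστ) hx)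
      · have hσne : σ.Nonempty := L.nonempty_mem σ hσ
        have hcard1 : σ.card = 1 := by
          have h1 : 1 ≤ σ.card := Finset.card_pos.2 hσne
          have h2' : σ.card ≤ (mx σ).card := Finset.card_le_card hsubστ
          omega
        obtain ⟨v, hv⟩ := Finset.card_eq_one.1 hcard1
        rw [hv, Finset.coe_singleton, convexHull_singleton]
        intro x hx
        rw [Set.mem_singleton_iff] at hx
        subst hx
        exact continuousWithinAt_singleton
  · -- definability
    unfold DefMapOn
    -- identity evaluation of π on faces with no big maximal face equal to them
    have hπid_face : ∀ σ ∈ L.faces, ¬(2 ≤ (mx σ).card ∧ σ = mx σ) →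
        ∀ x ∈ convexHull ℝ (↑σ : Set (Euc m)), π x = x := by
      intro σ hσ hcond x hx
      by_cases h2 : 2 ≤ (mx σ).card
      · have heq : σ ≠ mx σ := fun h => hcond ⟨h2, h⟩
        have hxτ : x ∈ convexHull ℝ (↑(mx σ) : Set (Euc m)) :=
          convexHull_mono (Finset.coe_subset.2 (hmxsub σ hσ)) hx
        have hbd : x ∈ relBdry (mx σ) :=
          Set.mem_biUnion (ssubset_of_subset_of_ne (hmxsub σ hσ) heq) hx
        rw [hπF _ (hmxmax' σ hσ) h2 x hxτ]
        exact hFfix _ (hmxmax' σ hσ) h2 x hxτ hbd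
      · have hσne : σ.Nonempty := L.nonempty_mem σ hσ
        have hcard1 : σ.card = 1 := by
          have h1 : 1 ≤ σ.card := Finset.card_pos.2 hσne
          have h2' : σ.card ≤ (mx σ).card := Finset.card_le_card (hmxsub σ hσ)
          omega
        obtain ⟨v, hv⟩ := Finset.card_eq_one.1 hcard1
        have hxv : x = v := by
          rw [hv, Finset.coe_singleton, convexHull_singleton] at hx
          exact hx
        subst hxv
        have hσmax : IsMaximalFace (↑L.faces : Set (Finset (Euc m))) σ := by
          have hEq : σ = mx σ := Finset.eq_of_subset_of_card_le (hmxsub σ hσ) (by omega)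
          rw [hEq]; exact hmxmax' σ hσ
        have hPneg : ¬ ∃ τ0 : Finset (Euc m),
            (IsMaximalFace (↑L.faces : Set (Finset (Euc m))) τ0 ∧ 2 ≤ τ0.card) ∧
            x ∈ convexHull ℝ (↑τ0 : Set (Euc m)) := by
          rintro ⟨τ0, ⟨hM0, h20⟩, hv0⟩
          have hneq : σ ≠ τ0 := by
            intro hEq
            rw [← hEq] at h20
            omega
          have hbd := hinterBdry σ τ0 hσmax hM0 hneq x hx hv0
          rw [relBdry] at hbd
          obtain ⟨t, ht, hvt⟩ := Set.mem_iUnion₂.1 hbd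
          rw [Set.mem_setOf_eq, hv] at ht
          rw [Finset.ssubset_singleton_iff] at ht
          rw [ht] at hvt
          simp at hvt
        simp only [hπ]
        rw [dif_neg hPneg]
    -- the two families of definable sets
    set HS : Finset (Euc m) → Set (Fin (m + m) → ℝ) := fun σ =>
      {z | (∀ k : Fin m, z (Fin.castAdd m k)
            = ∑ i ∈ mx σ, lf (mx σ) i (SqAux.xpart z) * i k)
        ∧ (∀ i ∈ mx σ, 0 ≤ lf (mx σ) i (SqAux.xpart z))
        ∧ (∀ i ∈ mx σ, i ∉ σ → lf (mx σ) i (SqAux.xpart z) = 0)} with hHS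
    set FS : Finset (Euc m) → Set (Fin (m + m) → ℝ) := fun σ =>
      if 2 ≤ (mx σ).card ∧ σ = mx σ then
        {z | ∃ i ∈ mx σ,
          (∀ j ∈ mx σ, lf (mx σ) i (SqAux.xpart z) ≤ lf (mx σ) j (SqAux.xpart z)) ∧
          ((1 - ((mx σ).card : ℝ) * lf (mx σ) i (SqAux.xpart z) ≤ ε / simpDelta (mx σ) ∧
              ∀ k : Fin m, (ε / simpDelta (mx σ)) * (z (Fin.natAdd m k) - bary (mx σ) k)
                = z (Fin.castAdd m k) - bary (mx σ) k) ∨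
            (ε / simpDelta (mx σ) ≤ 1 - ((mx σ).card : ℝ) * lf (mx σ) i (SqAux.xpart z) ∧
              ∀ k : Fin m, (1 - ((mx σ).card : ℝ) * lf (mx σ) i (SqAux.xpart z)) *
                (z (Fin.natAdd m k) - bary (mx σ) k)
                = z (Fin.castAdd m k) - bary (mx σ) k))}
      else {z | ∀ k : Fin m, z (Fin.natAdd m k) = z (Fin.castAdd m k)} with hFS
    have hHS_iff : ∀ σ ∈ L.faces, ∀ z : Fin (m + m) → ℝ,
        (z ∈ HS σ ↔ SqAux.xpart z ∈ convexHull ℝ (↑σ : Set (Euc m))) := by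
      intro σ hσ z
      have hne' : (mx σ).Nonempty := L.nonempty_mem _ (hmxf σ hσ)
      have hiff := SqAux.mem_hull_sub_iff hne' (hsum1 _ (hmxf σ hσ)) (hcoord _ (hmxf σ hσ))
        (hmxsub σ hσ) (SqAux.xpart z)
      simp only [hHS, Set.mem_setOf_eq]
      rw [hiff]
      exact Iff.rfl
    have hFS_iff : ∀ σ ∈ L.faces, ∀ z : Fin (m + m) → ℝ,
        SqAux.xpart z ∈ convexHull ℝ (↑σ : Set (Euc m)) →
        (z ∈ FS σ ↔ ∀ j, z (Fin.natAdd m j) = π (SqAux.xpart z) j) := by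
      intro σ hσ z hxσ
      have hyiff : ∀ v : Euc m, (∀ j, z (Fin.natAdd m j) = v j) ↔ SqAux.ypart z = v := by
        intro v
        constructor
        · intro h; ext j; exact h j
        · intro h j; rw [← h]; rfl
      by_cases hcond : 2 ≤ (mx σ).card ∧ σ = mx σ
      · obtain ⟨h2, hEq⟩ := hcond
        have hτf := hmxf σ hσ
        have hne' : (mx σ).Nonempty := L.nonempty_mem _ hτf
        obtain ⟨hr0, hr1⟩ := hrfacts _ (hmxmax' σ hσ) h2
        have hxτ : SqAux.xpart z ∈ convexHull ℝ (↑(mx σ) : Set (Euc m)) := by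
          rw [← hEq]; exact hxσ
        have hform := SqAux.sqF_form_iff hne' (hsum1 _ hτf) (hcoord _ hτf)
          (x := SqAux.xpart z) (y := SqAux.ypart z) hr0 hxτ
        have hπeq : π (SqAux.xpart z)
            = SqAux.sqF (mx σ) hne' (lf (mx σ)) (ε / simpDelta (mx σ)) (SqAux.xpart z) := by
          rw [hπF _ (hmxmax' σ hσ) h2 _ hxτ]
          simp only [hF]
          rw [dif_pos hne']
        rw [hyiff (π (SqAux.xpart z)), hπeq]
        simp only [hFS, if_pos (show 2 ≤ (mx σ).card ∧ σ = mx σ from ⟨h2, hEq⟩),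
          Set.mem_setOf_eq]
        rw [hform]
        exact Iff.rfl
      · simp only [hFS, if_neg hcond, Set.mem_setOf_eq]
        have hid := hπid_face σ hσ hcond _ hxσ
        constructor
        · intro h j; rw [hid]; exact h j
        · intro h k
          have hk := h k
          rw [hid] at hk
          exact hk
    have hDmain : {z : Fin (m + m) → ℝ | ∃ x ∈ polyh (↑L.faces : Set (Finset (Euc m))),
        (∀ i, z (Fin.castAdd m i) = x i) ∧ ∀ j, z (Fin.natAdd m j) = π x j}
        = ⋃ σ ∈ L.faces, (HS σ ∩ FS σ) := by
      ext z
      simp only [Set.mem_setOf_eq, Set.mem_iUnion, Set.mem_inter_iff]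
      constructor
      · rintro ⟨x, hxp, hxi, hyj⟩
        have hxz : x = SqAux.xpart z := PiLp.ext fun i => (hxi i).symm
        subst hxz
        unfold polyh at hxp
        obtain ⟨σ, hσ, hxσ⟩ := Set.mem_iUnion₂.1 hxp
        have hσf : σ ∈ L.faces := Finset.mem_coe.1 hσ
        exact ⟨σ, hσf, (hHS_iff σ hσf z).2 hxσ, (hFS_iff σ hσf z hxσ).2 hyj⟩
      · rintro ⟨σ, hσf, hz1, hz2⟩
        have hxσ := (hHS_iff σ hσf z).1 hz1
        refine ⟨SqAux.xpart z, ?_, fun i => rfl, (hFS_iff σ hσf z hxσ).1 hz2⟩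
        unfold polyh
        exact Set.mem_iUnion₂.2 ⟨σ, Finset.mem_coe.2 hσf, hxσ⟩
    rw [hDmain]
    apply SqAux.defSet_biUnion
    intro σ hσf
    have hτf := hmxf σ hσf
    have hPL : ∀ i : Euc m,
        SqAux.IsPolyFn (fun z : Fin (m + m) → ℝ => lf (mx σ) i (SqAux.xpart z)) := by
      intro i
      obtain ⟨f, d, hfd⟩ := haff _ hτf i
      have he : (fun z : Fin (m + m) → ℝ => lf (mx σ) i (SqAux.xpart z))
          = fun z => f (SqAux.xpart z) + d := funext fun z => hfd _
      rw [he]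
      exact SqAux.isPolyFn_lin_xpart f d
    apply SqAux.defSet_inter
    · -- HS σ is definable
      have hHSeq : HS σ = (⋂ k ∈ (Finset.univ : Finset (Fin m)),
          {z : Fin (m + m) → ℝ | z (Fin.castAdd m k)
            = ∑ i ∈ mx σ, lf (mx σ) i (SqAux.xpart z) * i k})
          ∩ ((⋂ i ∈ mx σ, {z : Fin (m + m) → ℝ | (0:ℝ) ≤ lf (mx σ) i (SqAux.xpart z)})
          ∩ (⋂ i ∈ (mx σ \ σ), {z : Fin (m + m) → ℝ | lf (mx σ) i (SqAux.xpart z) = 0})) := by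
        simp only [hHS]
        ext z
        simp only [Set.mem_setOf_eq, Set.mem_inter_iff, Set.mem_iInter, Finset.mem_univ,
          Finset.mem_sdiff, and_imp]
        constructor
        · rintro ⟨h1, h2, h3⟩
          exact ⟨fun k _ => h1 k, fun i hi => h2 i hi, fun i hi hni => h3 i hi hni⟩
        · rintro ⟨h1, h2, h3⟩
          exact ⟨fun k => h1 k trivial, fun i hi => h2 i hi, fun i hi hni => h3 i hi hni⟩
      rw [hHSeq]
      apply SqAux.defSet_inter
      · apply SqAux.defSet_biInter
        intro k _
        exact SqAux.defSet_fn_eq S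
          (φ := fun z => z (Fin.castAdd m k))
          (ψ := fun z => ∑ i ∈ mx σ, lf (mx σ) i (SqAux.xpart z) * i k)
          (SqAux.isPolyFn_coord _)
          (SqAux.isPolyFn_sum _ _ (fun i _ => (hPL i).mul (SqAux.isPolyFn_const (i k))))
      · apply SqAux.defSet_inter
        · apply SqAux.defSet_biInter
          intro i _
          exact SqAux.defSet_fn_le S (φ := fun _ => (0:ℝ))
            (ψ := fun z => lf (mx σ) i (SqAux.xpart z))
            (SqAux.isPolyFn_const 0) (hPL i)
        · apply SqAux.defSet_biInter
          intro i _
          exact SqAux.defSet_fn_eq S (φ := fun z => lf (mx σ) i (SqAux.xpart z))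
            (ψ := fun _ => (0:ℝ)) (hPL i) (SqAux.isPolyFn_const 0)
    · -- FS σ is definable
      by_cases hcond : 2 ≤ (mx σ).card ∧ σ = mx σ
      · have hFSeq : FS σ = ⋃ i ∈ mx σ,
            ((⋂ j ∈ mx σ, {z : Fin (m + m) → ℝ |
                lf (mx σ) i (SqAux.xpart z) ≤ lf (mx σ) j (SqAux.xpart z)}) ∩
             (({z : Fin (m + m) → ℝ |
                  1 - ((mx σ).card : ℝ) * lf (mx σ) i (SqAux.xpart z) ≤ ε / simpDelta (mx σ)} ∩
               (⋂ k ∈ (Finset.univ : Finset (Fin m)), {z : Fin (m + m) → ℝ |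
                  (ε / simpDelta (mx σ)) * (z (Fin.natAdd m k) - bary (mx σ) k)
                    = z (Fin.castAdd m k) - bary (mx σ) k})) ∪
              ({z : Fin (m + m) → ℝ |
                  ε / simpDelta (mx σ) ≤ 1 - ((mx σ).card : ℝ) * lf (mx σ) i (SqAux.xpart z)} ∩
               (⋂ k ∈ (Finset.univ : Finset (Fin m)), {z : Fin (m + m) → ℝ |
                  (1 - ((mx σ).card : ℝ) * lf (mx σ) i (SqAux.xpart z)) *
                    (z (Fin.natAdd m k) - bary (mx σ) k)
                    = z (Fin.castAdd m k) - bary (mx σ) k})))) := by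
          simp only [hFS, if_pos hcond]
          ext z
          simp only [Set.mem_setOf_eq, Set.mem_iUnion, Set.mem_inter_iff, Set.mem_union,
            Set.mem_iInter, Finset.mem_univ, exists_prop, forall_const]
        rw [hFSeq]
        apply SqAux.defSet_biUnion
        intro i _
        apply SqAux.defSet_inter
        · apply SqAux.defSet_biInter
          intro j _
          exact SqAux.defSet_fn_le S (φ := fun z => lf (mx σ) i (SqAux.xpart z))
            (ψ := fun z => lf (mx σ) j (SqAux.xpart z)) (hPL i) (hPL j)
        · apply S.union_mem
          · apply SqAux.defSet_inter
            · exact SqAux.defSet_fn_le S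
                (φ := fun z => 1 - ((mx σ).card : ℝ) * lf (mx σ) i (SqAux.xpart z))
                (ψ := fun _ => ε / simpDelta (mx σ))
                ((SqAux.isPolyFn_const 1).sub ((SqAux.isPolyFn_const _).mul (hPL i)))
                (SqAux.isPolyFn_const _)
            · apply SqAux.defSet_biInter
              intro k _
              exact SqAux.defSet_fn_eq S
                (φ := fun z => (ε / simpDelta (mx σ)) * (z (Fin.natAdd m k) - bary (mx σ) k))
                (ψ := fun z => z (Fin.castAdd m k) - bary (mx σ) k)
                ((SqAux.isPolyFn_const _).mul
                  ((SqAux.isPolyFn_coord _).sub (SqAux.isPolyFn_const _)))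
                ((SqAux.isPolyFn_coord _).sub (SqAux.isPolyFn_const _))
          · apply SqAux.defSet_inter
            · exact SqAux.defSet_fn_le S
                (φ := fun _ => ε / simpDelta (mx σ))
                (ψ := fun z => 1 - ((mx σ).card : ℝ) * lf (mx σ) i (SqAux.xpart z))
                (SqAux.isPolyFn_const _)
                ((SqAux.isPolyFn_const 1).sub ((SqAux.isPolyFn_const _).mul (hPL i)))
            · apply SqAux.defSet_biInter
              intro k _
              exact SqAux.defSet_fn_eq S
                (φ := fun z => (1 - ((mx σ).card : ℝ) * lf (mx σ) i (SqAux.xpart z)) *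
                  (z (Fin.natAdd m k) - bary (mx σ) k))
                (ψ := fun z => z (Fin.castAdd m k) - bary (mx σ) k)
                (((SqAux.isPolyFn_const 1).sub ((SqAux.isPolyFn_const _).mul (hPL i))).mul
                  ((SqAux.isPolyFn_coord _).sub (SqAux.isPolyFn_const _)))
                ((SqAux.isPolyFn_coord _).sub (SqAux.isPolyFn_const _))
      · have hFSeq : FS σ = ⋂ k ∈ (Finset.univ : Finset (Fin m)),
            {z : Fin (m + m) → ℝ | z (Fin.natAdd m k) = z (Fin.castAdd m k)} := by
          simp only [hFS, if_neg hcond]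
          ext z
          simp
        rw [hFSeq]
        apply SqAux.defSet_biInter
        intro k _
        exact SqAux.defSet_fn_eq S (φ := fun z => z (Fin.natAdd m k))
          (ψ := fun z => z (Fin.castAdd m k))
          (SqAux.isPolyFn_coord _) (SqAux.isPolyFn_coord _)
end
end
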